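/- arXiv:1602.06820 — 6 statements merged into one kernel-verified Lean document; each statement's English description precedes it below -/
import Mathlib

section
/- Let b ≥ 3, let n be divisible by every integer i with 3 ≤ i ≤ b, and let N ≥ 1 be an integer. Let C_L ⊆ 𝔽₂ⁿ be a code that can correct any consecutive deletion burst of size at most 2. For each 3 ≤ i ≤ b fix parameters 0 ≤ a_i ≤ n/i, 0 ≤ c_i < N+1, d_i ∈ {0,1}, and define C = { x ∈ 𝔽₂ⁿ : x ∈ C_L; for each 3 ≤ i ≤ b, A_i(x)₁ ∈ VT_{a_i}(n/i) and every run of A_i(x)₁ has length at most N, and A_i(x)_j ∈ SVT_{c_i,d_i}(n/i, N+1) for all 2 ≤ j ≤ i }. Then C can correct any consecutive deletion burst of size at most b. -/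
/-- The `b`-burst-deletion ball of `x`: all vectors obtained from `x` by deleting
`b` consecutive coordinates. -/
def delBall (b : ℕ) {n : ℕ} (x : Fin n → Bool) : Set (Fin (n - b) → Bool) :=
  { y | ∃ i ≤ n - b, ∀ j : Fin (n - b),
      y j = if (j : ℕ) < i
        then x ⟨(j : ℕ), by have := j.isLt; omega⟩
        else x ⟨(j : ℕ) + b, by have := j.isLt; omega⟩ }

/-- The `b`-burst-insertion ball of `x`: all vectors `v` of length `n + b`
such that `x` is obtained from `v` by deleting `b` consecutive coordinates. -/
def insBall (b : ℕ) {n : ℕ} (x : Fin n → Bool) : Set (Fin (n + b) → Bool) :=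
  { v | ∃ i ≤ n, ∀ j : Fin n,
      x j = if (j : ℕ) < i
        then v ⟨(j : ℕ), by have := j.isLt; omega⟩
        else v ⟨(j : ℕ) + b, by have := j.isLt; omega⟩ }

/-- Number of runs (maximal blocks of consecutive equal coordinates) of a binary vector. -/
def numRuns {m : ℕ} (z : Fin m → Bool) : ℕ :=
  (Finset.univ.filter (fun i : Fin m =>
    (i : ℕ) = 0 ∨ z i ≠ z ⟨(i : ℕ) - 1, by have := i.isLt; omega⟩)).card

/-- Every run of `z` has length at most `f`: every window of `f + 1` consecutive
coordinates contains two different values. -/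
def maxRunLe {m : ℕ} (f : ℕ) (z : Fin m → Bool) : Prop :=
  ∀ i : ℕ, ∀ hi : i + f < m, ∃ j : ℕ, ∃ hj : j ≤ f,
    z ⟨i + j, by omega⟩ ≠ z ⟨i, by omega⟩

/-- The Varshamov–Tenengolts code `VT_a(n)`. -/
def VT (n a : ℕ) : Set (Fin n → Bool) :=
  { x | (∑ i : Fin n, ((i : ℕ) + 1) * (x i).toNat) ≡ a [MOD n + 1] }

/-- The shifted Varshamov–Tenengolts code `SVT_{c,d}(n,P)`. -/
def SVT (n P c d : ℕ) : Set (Fin n → Bool) :=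
  { x | (∑ i : Fin n, ((i : ℕ) + 1) * (x i).toNat) ≡ c [MOD P] ∧
        (∑ i : Fin n, (x i).toNat) ≡ d [MOD 2] }

/-- The `(2,1)`-burst-correcting code `C_{2,1}(n,a,c)`. -/
def C21 (n a c : ℕ) : Set (Fin n → Bool) :=
  { x | (∑ i : Fin n, (x i).toNat) ≡ c [MOD 4] ∧
        (∑ i : Fin n, ((i : ℕ) + 1) * (x i).toNat) ≡ a [MOD 2 * n - 1] }

/-- Row `r` (0-indexed) of the `b × (n / b)` array `A_b(x)`: the entry in
column `j` (0-indexed) is `x (j * b + r)`. -/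
def arrRow {n : ℕ} (b : ℕ) (x : Fin n → Bool) (r : Fin b) : Fin (n / b) → Bool :=
  fun j => x ⟨(j : ℕ) * b + (r : ℕ), by
    have hj : (j : ℕ) + 1 ≤ n / b := j.isLt
    have hr := r.isLt
    have h1 : ((j : ℕ) + 1) * b ≤ n / b * b := Nat.mul_le_mul_right b hj
    have h2 : n / b * b ≤ n := Nat.div_mul_le_self n b
    have h3 : ((j : ℕ) + 1) * b = (j : ℕ) * b + b := by ring
    omega⟩

/-- Non-consecutive burst deletion ball: all vectors obtained from `x` by deleting
`a` coordinates whose positions all lie within a window of `b` consecutive positions. -/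
def ncDelBall (a b : ℕ) {n : ℕ} (x : Fin n → Bool) : Set (Fin (n - a) → Bool) :=
  { y | ∃ f : Fin (n - a) → Fin n, StrictMono f ∧ (∀ j, y j = x (f j)) ∧
      ∃ i : ℕ, ∀ p : Fin n, p ∉ Set.range f → i ≤ (p : ℕ) ∧ (p : ℕ) < i + b }

/-- Non-consecutive burst insertion ball: all vectors `v` of length `n + a` from which
`x` is obtained by a non-consecutive deletion burst of `a` deletions within a window
of `b` consecutive positions. -/
def ncInsBall (a b : ℕ) {n : ℕ} (x : Fin n → Bool) : Set (Fin (n + a) → Bool) :=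
  { v | ∃ f : Fin n → Fin (n + a), StrictMono f ∧ (∀ j, x j = v (f j)) ∧
      ∃ i : ℕ, ∀ p : Fin (n + a), p ∉ Set.range f → i ≤ (p : ℕ) ∧ (p : ℕ) < i + b }

/-- The vector obtained from `x` by deleting the coordinate at (0-indexed) position `k`. -/
def delOne {n : ℕ} (x : Fin n → Bool) (k : ℕ) : Fin (n - 1) → Bool :=
  fun j => if (j : ℕ) < k
    then x ⟨(j : ℕ), by have := j.isLt; omega⟩
    else x ⟨(j : ℕ) + 1, by have := j.isLt; omega⟩

/-- The `(2,1)`-burst ball of `x`: all results of deleting two adjacent coordinates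
of `x` and inserting one bit at the same position. -/
def d21Ball {n : ℕ} (x : Fin n → Bool) : Set (Fin (n - 1) → Bool) :=
  { y | ∃ i : ℕ, ∃ hi : i + 1 < n, ∃ a : Bool,
      ∀ j : Fin (n - 1), y j =
        if (j : ℕ) < i then x ⟨(j : ℕ), by have := j.isLt; omega⟩
        else if (j : ℕ) = i then a
        else x ⟨(j : ℕ) + 1, by have := j.isLt; omega⟩ }

/-- The code of Construction 4: codewords lie in `C_L`, the first row of each level's
array is a run-length-limited VT codeword, and the remaining rows of each level lie in
shifted VT codes. -/
def code14 (n b N : ℕ) (a c d : ℕ → ℕ) (CL : Set (Fin n → Bool)) : Set (Fin n → Bool) :=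
  { x | x ∈ CL ∧ ∀ i : ℕ, ∀ h3 : 3 ≤ i, ∀ hib : i ≤ b,
      (arrRow i x ⟨0, by omega⟩ ∈ VT (n / i) (a i) ∧
        maxRunLe N (arrRow i x ⟨0, by omega⟩)) ∧
      ∀ j : Fin i, 1 ≤ (j : ℕ) → arrRow i x j ∈ SVT (n / i) (N + 1) (c i) (d i) }


private lemma bdc_shiftsum (g : ℕ → ℕ) (a b : ℕ) :
    (∑ i ∈ Finset.Ico a b, g (i + 1)) = ∑ i ∈ Finset.Ico (a + 1) (b + 1), g i := by
  rw [Finset.sum_Ico_eq_sum_range, Finset.sum_Ico_eq_sum_range]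
  have h : b + 1 - (a + 1) = b - a := by omega
  rw [h]
  exact Finset.sum_congr rfl fun i _ => by congr 1; omega

private lemma bdc_modeq_cancel {M a b : ℕ} (h : Nat.ModEq M a b) (hba : b ≤ a)
    (hlt : a - b < M) : a = b := by
  have hd : M ∣ a - b := (Nat.modEq_iff_dvd' hba).mp h.symm
  have h0 := Nat.eq_zero_of_dvd_of_lt hd hlt
  omega

private lemma bdc_split (W U V : ℕ → ℕ) (m k k' : ℕ) (hkk : k ≤ k') (hk' : k' < m)
    (hW : ∀ i, W i ≤ W (i + 1))
    (hlt : ∀ j, j < k → U j = V j)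
    (hmid : ∀ j, k ≤ j → j < k' → U (j + 1) = V j)
    (hgt : ∀ j, k' < j → U j = V j) :
    (∑ i ∈ Finset.range m, W i * U i) + W k' * V k'
      = (∑ i ∈ Finset.range m, W i * V i) + W k * U k
        + ∑ i ∈ Finset.Ico (k + 1) (k' + 1), (W i - W (i - 1)) * U i := by
  have h1 : k ≤ k' + 1 := by omega
  have h2 : k' + 1 ≤ m := hk'
  have d : ∀ F : ℕ → ℕ, (∑ i ∈ Finset.range m, F i)
      = (∑ i ∈ Finset.Ico 0 k, F i) + ((∑ i ∈ Finset.Ico k (k'+1), F i)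
        + ∑ i ∈ Finset.Ico (k'+1) m, F i) := by
    intro F
    rw [Finset.sum_Ico_consecutive F h1 h2, Finset.sum_Ico_consecutive F (Nat.zero_le k) (by omega),
      Finset.range_eq_Ico]
  have dU := d (fun i => W i * U i)
  have dV := d (fun i => W i * V i)
  have headUV : (∑ i ∈ Finset.Ico 0 k, W i * U i) = ∑ i ∈ Finset.Ico 0 k, W i * V i :=
    Finset.sum_congr rfl fun i hi => by rw [hlt i (Finset.mem_Ico.mp hi).2]
  have tailUV : (∑ i ∈ Finset.Ico (k'+1) m, W i * U i) = ∑ i ∈ Finset.Ico (k'+1) m, W i * V i :=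
    Finset.sum_congr rfl fun i hi => by rw [hgt i (by exact (Finset.mem_Ico.mp hi).1)]
  have midU : (∑ i ∈ Finset.Ico k (k'+1), W i * U i)
      = W k * U k + ∑ i ∈ Finset.Ico (k+1) (k'+1), W i * U i :=
    Finset.sum_eq_sum_Ico_succ_bot (by omega) _
  have midV : (∑ i ∈ Finset.Ico k (k'+1), W i * V i)
      = (∑ i ∈ Finset.Ico k k', W i * V i) + W k' * V k' :=
    Finset.sum_Ico_succ_top (by omega) _
  have shiftV : (∑ i ∈ Finset.Ico k k', W i * V i)
      = ∑ i ∈ Finset.Ico (k+1) (k'+1), W (i - 1) * U i := by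
    rw [← bdc_shiftsum (fun i => W (i - 1) * U i) k k']
    refine Finset.sum_congr rfl fun i hi => ?_
    obtain ⟨hi1, hi2⟩ := Finset.mem_Ico.mp hi
    simp only [Nat.add_sub_cancel]
    rw [hmid i hi1 hi2]
  have midcomb : (∑ i ∈ Finset.Ico (k+1) (k'+1), W i * U i)
      = (∑ i ∈ Finset.Ico (k+1) (k'+1), W (i - 1) * U i)
        + ∑ i ∈ Finset.Ico (k+1) (k'+1), (W i - W (i - 1)) * U i := by
    rw [← Finset.sum_add_distrib]
    refine Finset.sum_congr rfl fun i hi => ?_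
    obtain ⟨hi1, _⟩ := Finset.mem_Ico.mp hi
    have hle : W (i - 1) ≤ W i := by
      have := hW (i - 1)
      have he : i - 1 + 1 = i := by omega
      rwa [he] at this
    have hadd : W (i - 1) + (W i - W (i - 1)) = W i := by omega
    rw [← Nat.add_mul, hadd]
  linarith [dU, dV, headUV, tailUV, midU, midV, shiftV, midcomb]


private lemma bdc_ident1 (U V : ℕ → ℕ) (m k k' : ℕ) (hkk : k ≤ k') (hk' : k' < m)
    (hlt : ∀ j, j < k → U j = V j)
    (hmid : ∀ j, k ≤ j → j < k' → U (j + 1) = V j)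
    (hgt : ∀ j, k' < j → U j = V j) :
    (∑ i ∈ Finset.range m, (i + 1) * U i) + (k' + 1) * V k'
      = (∑ i ∈ Finset.range m, (i + 1) * V i) + (k + 1) * U k
        + ∑ i ∈ Finset.Ico (k + 1) (k' + 1), U i := by
  have h := bdc_split (fun i => i + 1) U V m k k' hkk hk' (fun i => by show i + 1 ≤ i + 1 + 1; omega) hlt hmid hgt
  rw [h]
  congr 1
  refine Finset.sum_congr rfl fun i hi => ?_
  obtain ⟨hi1, _⟩ := Finset.mem_Ico.mp hi
  have : i + 1 - (i - 1 + 1) = 1 := by omega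
  rw [this, one_mul]

private lemma bdc_ident2 (U V : ℕ → ℕ) (m k k' : ℕ) (hkk : k ≤ k') (hk' : k' < m)
    (hlt : ∀ j, j < k → U j = V j)
    (hmid : ∀ j, k ≤ j → j < k' → U (j + 1) = V j)
    (hgt : ∀ j, k' < j → U j = V j) :
    (∑ i ∈ Finset.range m, U i) + V k' = (∑ i ∈ Finset.range m, V i) + U k := by
  have h := bdc_split (fun _ => 1) U V m k k' hkk hk' (fun i => le_refl 1) hlt hmid hgt
  simp only [one_mul, Nat.sub_self, zero_mul, Finset.sum_const_zero, add_zero] at h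
  exact h

private lemma bdc_all_one {s : Finset ℕ} {f : ℕ → ℕ} (hle : ∀ i ∈ s, f i ≤ 1)
    (hsum : (∑ i ∈ s, f i) = s.card) : ∀ i ∈ s, f i = 1 := by
  intro i hi
  by_contra hne
  have h0 : f i = 0 := by have := hle i hi; omega
  have hsplit : f i + (∑ j ∈ s.erase i, f j) = ∑ j ∈ s, f j := Finset.add_sum_erase s f hi
  have hb : (∑ j ∈ s.erase i, f j) ≤ (s.erase i).card := by
    have := Finset.sum_le_card_nsmul (s.erase i) f 1
      (fun j hj => hle j (Finset.mem_of_mem_erase hj))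
    simpa using this
  have hcard : (s.erase i).card = s.card - 1 := Finset.card_erase_of_mem hi
  have hpos : 1 ≤ s.card := Finset.card_pos.mpr ⟨i, hi⟩
  omega

private lemma bdc_core {m M : ℕ} (u v : Fin m → Bool) (k k' : ℕ) (hkk : k ≤ k') (hk' : k' < m)
    (h : ∀ j : Fin (m - 1), delOne u k j = delOne v k' j)
    (hS : (∑ i : Fin m, ((i : ℕ) + 1) * (u i).toNat)
        ≡ (∑ i : Fin m, ((i : ℕ) + 1) * (v i).toNat) [MOD M])
    (hwin : k' - k < M)
    (hbit : ((∑ i : Fin m, (u i).toNat) ≡ (∑ i : Fin m, (v i).toNat) [MOD 2]) ∨ m < M) :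
    u = v := by
  have hkm : k < m := lt_of_le_of_lt hkk hk'
  -- bool-level consequences of the common descendant
  have hbl : ∀ j : ℕ, ∀ hj : j < m, j < k → u ⟨j, hj⟩ = v ⟨j, hj⟩ := by
    intro j hj hjk
    have hj1 : j < m - 1 := by omega
    have := h ⟨j, hj1⟩
    simp only [delOne] at this
    rw [if_pos hjk, if_pos (by omega : j < k')] at this
    exact this
  have hbm : ∀ j : ℕ, k ≤ j → j < k' → ∀ hj1 : j + 1 < m, ∀ hj : j < m,
      u ⟨j + 1, hj1⟩ = v ⟨j, hj⟩ := by
    intro j hj1 hj2 hjm1 hjm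
    have hj0 : j < m - 1 := by omega
    have := h ⟨j, hj0⟩
    simp only [delOne] at this
    rw [if_neg (by omega : ¬ j < k), if_pos hj2] at this
    exact this
  have hbg : ∀ j : ℕ, ∀ hj : j < m, k' < j → u ⟨j, hj⟩ = v ⟨j, hj⟩ := by
    intro j hj hjk
    have hj0 : j - 1 < m - 1 := by omega
    have := h ⟨j - 1, hj0⟩
    simp only [delOne] at this
    rw [if_neg (by omega : ¬ (j - 1) < k), if_neg (by omega : ¬ (j - 1) < k')] at this
    have he : j - 1 + 1 = j := by omega
    simp only [he] at this
    exact this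
  set U : ℕ → ℕ := fun j => if hj : j < m then (u ⟨j, hj⟩).toNat else 0 with hU
  set V : ℕ → ℕ := fun j => if hj : j < m then (v ⟨j, hj⟩).toNat else 0 with hV
  have hUle : ∀ j, U j ≤ 1 := by
    intro j; simp only [hU]; split
    · exact Bool.toNat_le _
    · omega
  have hlt : ∀ j, j < k → U j = V j := by
    intro j hjk
    have hj : j < m := by omega
    simp only [hU, hV, dif_pos hj, hbl j hj hjk]
  have hmid : ∀ j, k ≤ j → j < k' → U (j + 1) = V j := by
    intro j h1 h2
    have hj : j < m := by omega
    have hj1 : j + 1 < m := by omega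
    simp only [hU, hV, dif_pos hj, dif_pos hj1, hbm j h1 h2 hj1 hj]
  have hgt : ∀ j, k' < j → U j = V j := by
    intro j hjk
    by_cases hj : j < m
    · simp only [hU, hV, dif_pos hj, hbg j hj hjk]
    · simp only [hU, hV, dif_neg hj]
  -- bridge Fin-sums to range-sums
  have bu1 : (∑ i : Fin m, ((i : ℕ) + 1) * (u i).toNat) = ∑ i ∈ Finset.range m, (i + 1) * U i := by
    rw [← Fin.sum_univ_eq_sum_range (fun i => (i + 1) * U i) m]
    refine Finset.sum_congr rfl fun i _ => ?_
    simp only [hU, dif_pos i.isLt, Fin.eta]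
  have bv1 : (∑ i : Fin m, ((i : ℕ) + 1) * (v i).toNat) = ∑ i ∈ Finset.range m, (i + 1) * V i := by
    rw [← Fin.sum_univ_eq_sum_range (fun i => (i + 1) * V i) m]
    refine Finset.sum_congr rfl fun i _ => ?_
    simp only [hV, dif_pos i.isLt, Fin.eta]
  have bu2 : (∑ i : Fin m, (u i).toNat) = ∑ i ∈ Finset.range m, U i := by
    rw [← Fin.sum_univ_eq_sum_range (fun i => U i) m]
    refine Finset.sum_congr rfl fun i _ => ?_
    simp only [hU, dif_pos i.isLt, Fin.eta]
  have bv2 : (∑ i : Fin m, (v i).toNat) = ∑ i ∈ Finset.range m, V i := by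
    rw [← Fin.sum_univ_eq_sum_range (fun i => V i) m]
    refine Finset.sum_congr rfl fun i _ => ?_
    simp only [hV, dif_pos i.isLt, Fin.eta]
  have eq1 := bdc_ident1 U V m k k' hkk hk' hlt hmid hgt
  have eq2 := bdc_ident2 U V m k k' hkk hk' hlt hmid hgt
  have hTle : (∑ i ∈ Finset.Ico (k + 1) (k' + 1), U i) ≤ k' - k := by
    have := Finset.sum_le_card_nsmul (Finset.Ico (k + 1) (k' + 1)) U 1
      (fun i _ => hUle i)
    simp only [smul_eq_mul, mul_one, Nat.card_Ico] at this
    exact le_trans this (by omega)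
  -- the key congruence
  have hS' : Nat.ModEq M ((k' + 1) * V k') ((k + 1) * U k + ∑ i ∈ Finset.Ico (k + 1) (k' + 1), U i) := by
    have e : Nat.ModEq M ((∑ i ∈ Finset.range m, (i + 1) * V i) + (k' + 1) * V k')
        ((∑ i ∈ Finset.range m, (i + 1) * V i) + ((k + 1) * U k + ∑ i ∈ Finset.Ico (k + 1) (k' + 1), U i)) := by
      calc (∑ i ∈ Finset.range m, (i + 1) * V i) + (k' + 1) * V k'
          ≡ (∑ i ∈ Finset.range m, (i + 1) * U i) + (k' + 1) * V k' [MOD M] := by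
            rw [← bu1, ← bv1]; exact hS.symm.add_right _
        _ = (∑ i ∈ Finset.range m, (i + 1) * V i) + ((k + 1) * U k + ∑ i ∈ Finset.Ico (k + 1) (k' + 1), U i) := by
            rw [← add_assoc]; exact eq1
    exact e.add_left_cancel' _
  -- bits at the deletion positions
  have hbits : U k = V k' ∨ m < M := by
    rcases hbit with hp | hm
    · left
      have hp' : Nat.ModEq 2 ((∑ i ∈ Finset.range m, U i)) ((∑ i ∈ Finset.range m, V i)) := by
        rw [← bu2, ← bv2]; exact hp
      have e : Nat.ModEq 2 ((∑ i ∈ Finset.range m, V i) + V k')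
          ((∑ i ∈ Finset.range m, V i) + U k) := by
        calc (∑ i ∈ Finset.range m, V i) + V k'
            ≡ (∑ i ∈ Finset.range m, U i) + V k' [MOD 2] := hp'.symm.add_right _
          _ = (∑ i ∈ Finset.range m, V i) + U k := eq2
      have e2 := e.add_left_cancel' _
      have hu1 := hUle k
      have hv1 : V k' ≤ 1 := by
        simp only [hV]; split
        · exact Bool.toNat_le _
        · omega
      unfold Nat.ModEq at e2
      omega
    · right; exact hm
  -- case analysis on the two bits
  have hu01 : U k = 0 ∨ U k = 1 := by have := hUle k; omega
  have hv01 : V k' = 0 ∨ V k' = 1 := by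
    have : V k' ≤ 1 := by
      simp only [hV]; split
      · exact Bool.toNat_le _
      · omega
    omega
  have hmain : U k = V k' ∧ ∀ i ∈ Finset.Ico (k + 1) (k' + 1), U i = U k := by
    rcases hu01 with h0u | h1u <;> rcases hv01 with h0v | h1v
    · -- 0, 0
      rw [h0u, h0v] at hS' ⊢
      rw [Nat.mul_zero] at hS'
      have hT0 : (k + 1) * 0 + (∑ i ∈ Finset.Ico (k + 1) (k' + 1), U i) = 0 := by
        refine (bdc_modeq_cancel hS'.symm (Nat.zero_le _) ?_).trans rfl
        rw [Nat.mul_zero, Nat.zero_add]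
        omega
      rw [Nat.mul_zero, Nat.zero_add] at hT0
      exact ⟨rfl, fun i hi => (Finset.sum_eq_zero_iff.mp hT0) i hi⟩
    · -- 0, 1 : contradiction
      exfalso
      rw [h0u, h1v, Nat.mul_zero, Nat.zero_add, Nat.mul_one] at hS'
      have := bdc_modeq_cancel hS' (by omega) (by omega)
      omega
    · -- 1, 0 : contradiction, needs m < M
      exfalso
      have hmM : m < M := by
        rcases hbits with hb | hm
        · omega
        · exact hm
      rw [h1u, h0v, Nat.mul_zero, Nat.mul_one] at hS'
      have := bdc_modeq_cancel hS'.symm (Nat.zero_le _) (by omega)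
      omega
    · -- 1, 1
      rw [h1u, h1v, Nat.mul_one, Nat.mul_one] at hS'
      have heq := bdc_modeq_cancel hS' (by omega) (by omega)
      have hTval : (∑ i ∈ Finset.Ico (k + 1) (k' + 1), U i) = k' - k := by omega
      refine ⟨by omega, fun i hi => ?_⟩
      rw [h1u]
      refine bdc_all_one (fun i _ => hUle i) ?_ i hi
      rw [hTval, Nat.card_Ico]
      omega
  obtain ⟨hbeq, hmidval⟩ := hmain
  have hUk : U k = (u ⟨k, hkm⟩).toNat := by simp only [hU, dif_pos hkm]
  have hVk' : V k' = (v ⟨k', hk'⟩).toNat := by simp only [hV, dif_pos hk']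
  have uval : ∀ j : ℕ, ∀ hj : j < m, k ≤ j → j ≤ k' → (u ⟨j, hj⟩).toNat = U k := by
    intro j hj h1 h2
    rcases Nat.eq_or_lt_of_le h1 with he | hlt2
    · subst he; exact hUk.symm
    · have hmem : j ∈ Finset.Ico (k + 1) (k' + 1) := Finset.mem_Ico.mpr ⟨by omega, by omega⟩
      have := hmidval j hmem
      simp only [hU, dif_pos hj] at this
      exact this
  have vval : ∀ j : ℕ, ∀ hj : j < m, k ≤ j → j ≤ k' → (v ⟨j, hj⟩).toNat = U k := by
    intro j hj h1 h2
    rcases Nat.eq_or_lt_of_le h2 with he | hlt2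
    · subst he; rw [← hVk', hbeq]
    · have hj1 : j + 1 < m := by omega
      rw [← hbm j h1 hlt2 hj1 hj]
      exact uval (j + 1) hj1 (by omega) (by omega)
  funext p
  obtain ⟨j, hj⟩ := p
  rcases Nat.lt_or_ge j k with hc1 | hc1
  · exact hbl j hj hc1
  rcases Nat.lt_or_ge k' j with hc2 | hc2
  · exact hbg j hj hc2
  have heqn : (u ⟨j, hj⟩).toNat = (v ⟨j, hj⟩).toNat := by
    rw [uval j hj hc1 hc2, vval j hj hc1 hc2]
  cases hu' : u ⟨j, hj⟩ <;> cases hv' : v ⟨j, hj⟩ <;> rw [hu', hv'] at heqn <;>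
    first
      | rfl
      | (exfalso; simp only [Bool.toNat_false, Bool.toNat_true] at heqn; omega)

private lemma bdc_VT_correct {m a : ℕ} {u v : Fin m → Bool} (hu : u ∈ VT m a) (hv : v ∈ VT m a)
    {k k' : ℕ} (hk : k < m) (hk' : k' < m)
    (h : ∀ j : Fin (m - 1), delOne u k j = delOne v k' j) : u = v := by
  have hS : (∑ i : Fin m, ((i : ℕ) + 1) * (u i).toNat)
      ≡ (∑ i : Fin m, ((i : ℕ) + 1) * (v i).toNat) [MOD m + 1] := hu.trans hv.symm
  rcases le_total k k' with hle | hle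
  · exact bdc_core u v k k' hle hk' h hS (by omega) (Or.inr (by omega))
  · exact (bdc_core v u k' k hle hk (fun j => (h j).symm) hS.symm (by omega)
      (Or.inr (by omega))).symm

private lemma bdc_SVT_correct {m P c d : ℕ} {u v : Fin m → Bool}
    (hu : u ∈ SVT m P c d) (hv : v ∈ SVT m P c d)
    {k k' : ℕ} (hk : k < m) (hk' : k' < m) (hw1 : k - k' < P) (hw2 : k' - k < P)
    (h : ∀ j : Fin (m - 1), delOne u k j = delOne v k' j) : u = v := by
  have hS : (∑ i : Fin m, ((i : ℕ) + 1) * (u i).toNat)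
      ≡ (∑ i : Fin m, ((i : ℕ) + 1) * (v i).toNat) [MOD P] := hu.1.trans hv.1.symm
  have hp : (∑ i : Fin m, (u i).toNat) ≡ (∑ i : Fin m, (v i).toNat) [MOD 2] :=
    hu.2.trans hv.2.symm
  rcases le_total k k' with hle | hle
  · exact bdc_core u v k k' hle hk' h hS hw2 (Or.inl hp)
  · exact (bdc_core v u k' k hle hk (fun j => (h j).symm) hS.symm hw1 (Or.inl hp.symm)).symm

private lemma bdc_same_run {m : ℕ} {u : Fin m → Bool} {k k' : ℕ} (hkk : k ≤ k') (hk' : k' < m)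
    (h : ∀ j : Fin (m - 1), delOne u k j = delOne u k' j) :
    ∀ j : ℕ, k ≤ j → j ≤ k' → ∀ hj : j < m, u ⟨j, hj⟩ = u ⟨k, by omega⟩ := by
  have step : ∀ j : ℕ, k ≤ j → j < k' → ∀ hj1 : j + 1 < m, ∀ hj : j < m,
      u ⟨j + 1, hj1⟩ = u ⟨j, hj⟩ := by
    intro j h1 h2 hj1 hj
    have hj0 : j < m - 1 := by omega
    have := h ⟨j, hj0⟩
    simp only [delOne] at this
    rw [if_neg (by omega : ¬ j < k), if_pos h2] at this
    exact this
  intro j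
  induction j with
  | zero =>
    intro h1 _ hj
    exact congrArg u (Fin.ext (by simp only [Fin.val_mk]; omega))
  | succ j ih =>
    intro h1 h2 hj
    rcases Nat.eq_or_lt_of_le h1 with he | hlt
    · simp only [← he]
    · have hjm : j < m := by omega
      rw [step j (by omega) (by omega) hj hjm]
      exact ih (by omega) (by omega) hjm

private lemma bdc_run_dist {m N : ℕ} {u : Fin m → Bool} (hrun : maxRunLe N u)
    {k k' : ℕ} (hkk : k ≤ k') (hk : k < m) (hk' : k' < m) (hN : 1 ≤ N)
    (h : ∀ j : Fin (m - 1), delOne u k j = delOne u k' j) : k' - k < N := by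
  by_contra hcon
  have hge : k + N ≤ k' := by omega
  have hi : k + N < m := by omega
  obtain ⟨j, hjN, hne⟩ := hrun k hi
  exact hne (bdc_same_run hkk hk' h (k + j) (by omega) (by omega) (by omega))

private lemma bdc_kfact (s i m r : ℕ) (hs : 0 < s) (hr : r < s) (hm : 1 ≤ m)
    (hi : i ≤ s * m - s) :
    (∀ j : ℕ, j < (i + s - 1 - r) / s ↔ j * s + r < i)
    ∧ (i + s - 1 - r) / s < m
    ∧ (i + s - 1) / s ≤ (i + s - 1 - r) / s + 1
    ∧ (i + s - 1 - r) / s ≤ (i + s - 1) / s := by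
  have hcomm : s * m = m * s := by ring
  have hsm : s ≤ s * m := by
    calc s = s * 1 := (Nat.mul_one s).symm
    _ ≤ s * m := Nat.mul_le_mul_left s hm
  refine ⟨?_, ?_, ?_, ?_⟩
  · intro j
    have h1 : j < (i + s - 1 - r) / s ↔ j + 1 ≤ (i + s - 1 - r) / s := Iff.rfl
    rw [h1, Nat.le_div_iff_mul_le hs]
    have hmul : (j + 1) * s = j * s + s := by ring
    omega
  · rw [Nat.div_lt_iff_lt_mul hs]
    omega
  · have hq := Nat.div_add_mod (i + s - 1 - r) s
    have hmod : (i + s - 1 - r) % s < s := Nat.mod_lt _ hs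
    have h2 : (i + s - 1) / s < (i + s - 1 - r) / s + 2 := by
      rw [Nat.div_lt_iff_lt_mul hs]
      have hmul : ((i + s - 1 - r) / s + 2) * s = s * ((i + s - 1 - r) / s) + 2 * s := by ring
      omega
    omega
  · exact Nat.div_le_div_right (by omega)

/-- the code of Construction 4 can correct any consecutive deletion burst of
size at most `b`. -/
theorem code14_corrects_burst_at_most_b (n b N : ℕ) (hb : 3 ≤ b) (hn : 0 < n)
    (hN : 1 ≤ N) (hdvd : ∀ i, 3 ≤ i → i ≤ b → i ∣ n)
    (CL : Set (Fin n → Bool))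
    (hCL : ∀ x ∈ CL, ∀ y ∈ CL, x ≠ y →
      ∀ a, 1 ≤ a → a ≤ 2 → delBall a x ∩ delBall a y = ∅)
    (a c d : ℕ → ℕ)
    (ha : ∀ i, 3 ≤ i → i ≤ b → a i ≤ n / i)
    (hc : ∀ i, 3 ≤ i → i ≤ b → c i < N + 1)
    (hd : ∀ i, 3 ≤ i → i ≤ b → d i < 2) :
    ∀ x ∈ code14 n b N a c d CL, ∀ y ∈ code14 n b N a c d CL, x ≠ y →
      ∀ s, 1 ≤ s → s ≤ b → delBall s x ∩ delBall s y = ∅ := by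
  intro x hx y hy hxy s hs1 hsb
  rw [Set.eq_empty_iff_forall_notMem]
  rintro z ⟨hzx, hzy⟩
  by_cases hs2 : s ≤ 2
  · have hemp := hCL x hx.1 y hy.1 hxy s hs1 hs2
    rw [Set.eq_empty_iff_forall_notMem] at hemp
    exact hemp z ⟨hzx, hzy⟩
  have hs3 : 3 ≤ s := by omega
  have hspos : 0 < s := by omega
  have hsdvd : s ∣ n := hdvd s hs3 hsb
  set m := n / s with hmdef
  have hsm : s * m = n := Nat.mul_div_cancel' hsdvd
  have hm1 : 1 ≤ m := by
    rcases Nat.eq_zero_or_pos m with h0 | h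
    · rw [h0, Nat.mul_zero] at hsm; omega
    · exact h
  have hns : n - s = s * (m - 1) := by
    have h1 : s * (m - 1 + 1) = s * (m - 1) + s := Nat.mul_succ s (m - 1)
    have h2 : m - 1 + 1 = m := by omega
    rw [h2] at h1
    omega
  obtain ⟨ix, hix, hzx'⟩ := hzx
  obtain ⟨iy, hiy, hzy'⟩ := hzy
  have hidx : ∀ j : Fin (m - 1), ∀ r : ℕ, r < s → (j : ℕ) * s + r < n - s := by
    intro j r hr
    have hj : (j : ℕ) + 1 ≤ m - 1 := j.isLt
    have h1 : ((j : ℕ) + 1) * s ≤ (m - 1) * s := Nat.mul_le_mul_right s hj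
    have h2 : ((j : ℕ) + 1) * s = (j : ℕ) * s + s := by ring
    have h3 : (m - 1) * s = s * (m - 1) := by ring
    omega
  have hixm : ix ≤ s * m - s := by omega
  have hiym : iy ≤ s * m - s := by omega
  -- each row of z is a one-deletion descendant of the corresponding rows of x and y
  have hrow : ∀ (w : Fin n → Bool) (i : ℕ), i ≤ s * m - s →
      (∀ j : Fin (n - s), z j = if (j : ℕ) < i
        then w ⟨(j : ℕ), by have := j.isLt; omega⟩
        else w ⟨(j : ℕ) + s, by have := j.isLt; omega⟩) →
      ∀ r : Fin s, ∀ j : Fin (m - 1),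
        delOne (arrRow s w r) ((i + s - 1 - (r : ℕ)) / s) j
          = z ⟨(j : ℕ) * s + (r : ℕ), hidx j r r.isLt⟩ := by
    intro w i hi hzw r j
    obtain ⟨hiff, hklt, _, _⟩ := bdc_kfact s i m (r : ℕ) hspos r.isLt hm1 hi
    rw [hzw ⟨(j : ℕ) * s + (r : ℕ), hidx j r r.isLt⟩]
    simp only [delOne]
    rcases Nat.lt_or_ge ((j : ℕ) * s + (r : ℕ)) i with hlt | hge
    · rw [if_pos ((hiff (j : ℕ)).mpr hlt), if_pos hlt]
      rfl
    · rw [if_neg (fun hcon => by have := (hiff (j : ℕ)).mp hcon; omega),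
        if_neg (by omega)]
      show w _ = w _
      exact congrArg w (Fin.ext (by show ((j : ℕ) + 1) * s + (r : ℕ) = (j : ℕ) * s + (r : ℕ) + s; ring))
  have hxrow := hrow x ix hixm hzx'
  have hyrow := hrow y iy hiym hzy'
  have hcomb : ∀ r : Fin s, ∀ j : Fin (m - 1),
      delOne (arrRow s x r) ((ix + s - 1 - (r : ℕ)) / s) j
        = delOne (arrRow s y r) ((iy + s - 1 - (r : ℕ)) / s) j :=
    fun r j => (hxrow r j).trans (hyrow r j).symm
  have hkx := fun r : Fin s => bdc_kfact s ix m (r : ℕ) hspos r.isLt hm1 hixm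
  have hky := fun r : Fin s => bdc_kfact s iy m (r : ℕ) hspos r.isLt hm1 hiym
  obtain ⟨hxCL, hxc⟩ := hx
  obtain ⟨hyCL, hyc⟩ := hy
  have hx0 := (hxc s hs3 hsb).1
  have hy0 := (hyc s hs3 hsb).1
  have hxr := (hxc s hs3 hsb).2
  have hyr := (hyc s hs3 hsb).2
  set r0 : Fin s := ⟨0, hspos⟩ with hr0def
  have hr0 : (r0 : ℕ) = 0 := rfl
  -- row 0 of x equals row 0 of y
  have hrow0 : arrRow s x r0 = arrRow s y r0 :=
    bdc_VT_correct hx0.1 hy0.1 (hkx r0).2.1 (hky r0).2.1 (hcomb r0)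
  have hc0 : ∀ j : Fin (m - 1),
      delOne (arrRow s x r0) ((ix + s - 1) / s) j
        = delOne (arrRow s x r0) ((iy + s - 1) / s) j := by
    intro j
    have h1 := hcomb r0 j
    rw [← hrow0] at h1
    simpa only [hr0, Nat.sub_zero] using h1
  have hkx0 : (ix + s - 1) / s < m := by
    have := (hkx r0).2.1; rw [hr0, Nat.sub_zero] at this; exact this
  have hky0 : (iy + s - 1) / s < m := by
    have := (hky r0).2.1; rw [hr0, Nat.sub_zero] at this; exact this
  have hdist : (ix + s - 1) / s - (iy + s - 1) / s < N
      ∧ (iy + s - 1) / s - (ix + s - 1) / s < N := by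
    rcases le_total ((ix + s - 1) / s) ((iy + s - 1) / s) with hle | hle
    · have := bdc_run_dist hx0.2 hle hkx0 hky0 hN hc0
      constructor <;> omega
    · have := bdc_run_dist hx0.2 hle hky0 hkx0 hN (fun j => (hc0 j).symm)
      constructor <;> omega
  -- all rows of x equal the corresponding rows of y
  have hrows : ∀ r : Fin s, arrRow s x r = arrRow s y r := by
    intro r
    rcases Nat.eq_zero_or_pos (r : ℕ) with hr | hr
    · have : r = r0 := Fin.ext (by rw [hr, hr0])
      rw [this]; exact hrow0
    · have hw1 : (ix + s - 1 - (r : ℕ)) / s - (iy + s - 1 - (r : ℕ)) / s < N + 1 := by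
        have h1 := (hkx r).2.2.1; have h2 := (hkx r).2.2.2
        have h3 := (hky r).2.2.1; have h4 := (hky r).2.2.2
        omega
      have hw2 : (iy + s - 1 - (r : ℕ)) / s - (ix + s - 1 - (r : ℕ)) / s < N + 1 := by
        have h1 := (hkx r).2.2.1; have h2 := (hkx r).2.2.2
        have h3 := (hky r).2.2.1; have h4 := (hky r).2.2.2
        omega
      exact bdc_SVT_correct (hxr r hr) (hyr r hr) (hkx r).2.1 (hky r).2.1 hw1 hw2 (hcomb r)
  -- conclude x = y, contradiction
  refine hxy (funext fun p => ?_)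
  have hps : (p : ℕ) % s < s := Nat.mod_lt _ hspos
  have hpd : (p : ℕ) / s < m := by
    rw [Nat.div_lt_iff_lt_mul hspos]
    have h1 := p.isLt
    have h2 : m * s = s * m := Nat.mul_comm m s
    omega
  have heq := congrFun (hrows ⟨(p : ℕ) % s, hps⟩) ⟨(p : ℕ) / s, hpd⟩
  have hval : (p : ℕ) / s * s + (p : ℕ) % s = (p : ℕ) := by
    have h1 := Nat.div_add_mod (p : ℕ) s
    have h2 : (p : ℕ) / s * s = s * ((p : ℕ) / s) := Nat.mul_comm _ _
    omega
  have hx2 : x p = arrRow s x ⟨(p : ℕ) % s, hps⟩ ⟨(p : ℕ) / s, hpd⟩ := by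
    show x p = x ⟨(p : ℕ) / s * s + (p : ℕ) % s, _⟩
    exact congrArg x (Fin.ext hval.symm)
  have hy2 : y p = arrRow s y ⟨(p : ℕ) % s, hps⟩ ⟨(p : ℕ) / s, hpd⟩ := by
    show y p = y ⟨(p : ℕ) / s * s + (p : ℕ) % s, _⟩
    exact congrArg y (Fin.ext hval.symm)
  rw [hx2, hy2, heq]
end

section
/- Let x ∈ 𝔽₂ⁿ, let a, b₁, b₂ ∈ 𝔽₂, and suppose (a, b₁, b₂) ∉ { (1,0,0), (0,1,1) }. Then D_{2,1}^{(b₁,b₂)→a}(x) ⊆ D₁(x); that is, every vector obtained from x by deleting two adjacent coordinates equal to (b₁,b₂) and inserting the bit a at that position can also be obtained from x by a single deletion. -/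
/-- The set of vectors obtained from `x` by deleting an adjacent pair equal to `(b1, b2)`
and inserting the bit `a` at the same position. -/
def d21spec {n : ℕ} (x : Fin n → Bool) (b1 b2 a : Bool) : Set (Fin (n - 1) → Bool) :=
  { y | ∃ i : ℕ, ∃ hi : i + 1 < n,
      x ⟨i, by omega⟩ = b1 ∧ x ⟨i + 1, hi⟩ = b2 ∧
      ∀ j : Fin (n - 1), y j =
        if (j : ℕ) < i then x ⟨(j : ℕ), by have := j.isLt; omega⟩
        else if (j : ℕ) = i then a
        else x ⟨(j : ℕ) + 1, by have := j.isLt; omega⟩ }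

/-- if `(a, b₁, b₂) ∉ {(1,0,0), (0,1,1)}`, then
`D_{2,1}^{(b₁,b₂)→a}(x) ⊆ D₁(x)`. -/
theorem d21spec_subset_delBall_one (n : ℕ) (x : Fin n → Bool) (a b1 b2 : Bool)
    (h : ¬((a = true ∧ b1 = false ∧ b2 = false) ∨
           (a = false ∧ b1 = true ∧ b2 = true))) :
    d21spec x b1 b2 a ⊆ delBall 1 x := by
  intro y hy
  obtain ⟨i, hi, hb1, hb2, hy⟩ := hy
  have hab : a = b1 ∨ a = b2 := by
    cases a <;> cases b1 <;> cases b2 <;> simp_all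
  rcases hab with hab | hab
  · -- a = x i, delete position i+1
    refine ⟨i + 1, by omega, fun j => ?_⟩
    rw [hy j]
    rcases lt_trichotomy (j : ℕ) i with hj | hj | hj
    · simp [hj, Nat.lt_succ_of_lt hj]
    · simp only [hj, lt_irrefl, if_false, if_pos rfl, Nat.lt_succ_self, if_true]
      rw [hab, ← hb1]
    · have h1 : ¬ (j : ℕ) < i := by omega
      have h2 : ¬ (j : ℕ) = i := by omega
      have h3 : ¬ (j : ℕ) < i + 1 := by omega
      simp [h1, h2, h3]
  · -- a = x (i+1), delete position i
    refine ⟨i, by omega, fun j => ?_⟩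
    rw [hy j]
    rcases lt_trichotomy (j : ℕ) i with hj | hj | hj
    · simp [hj]
    · have h1 : ¬ (j : ℕ) < i := by omega
      simp only [h1, if_false, if_pos hj]
      rw [hab, ← hb2]
      congr 1
      exact Fin.ext (by simp [hj])
    · have h1 : ¬ (j : ℕ) < i := by omega
      have h2 : ¬ (j : ℕ) = i := by omega
      simp [h1, h2]
end

section
/- Let n ≥ 4, a ∈ ℤ_{2n−1}, and c ∈ ℤ₄. Then the code C_{2,1}(n,a,c) is a (2,1)-burst-correcting code: for all distinct x, y ∈ C_{2,1}(n,a,c), D_{2,1}(x) ∩ D_{2,1}(y) = ∅. -/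
def B2Z {n : ℕ} (x : Fin n → Bool) : ℕ → ℤ := fun j =>
  if h : j < n then ((x ⟨j, h⟩).toNat : ℤ) else 0

lemma B2Z_lt {n : ℕ} (x : Fin n → Bool) (j : ℕ) (h : j < n) :
    B2Z x j = ((x ⟨j, h⟩).toNat : ℤ) := dif_pos h

lemma B2Z_bool {n : ℕ} (x : Fin n → Bool) (j : ℕ) (h : j < n) :
    B2Z x j = 0 ∨ B2Z x j = 1 := by
  rw [B2Z_lt x j h]; cases x ⟨j, h⟩ <;> simp

lemma B2Z_nonneg {n : ℕ} (x : Fin n → Bool) (j : ℕ) : 0 ≤ B2Z x j := by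
  unfold B2Z; split <;> simp

lemma B2Z_le_one {n : ℕ} (x : Fin n → Bool) (j : ℕ) : B2Z x j ≤ 1 := by
  unfold B2Z; split
  · rename_i h; cases x ⟨j, h⟩ <;> simp
  · simp

lemma eq_of_B2Z {n : ℕ} (x y : Fin n → Bool) (h : ∀ m, m < n → B2Z x m = B2Z y m) :
    x = y := by
  funext j
  have h2 := h j j.isLt
  rw [B2Z_lt x j j.isLt, B2Z_lt y j j.isLt] at h2
  cases hx : x ⟨(j:ℕ), j.isLt⟩ <;> cases hy : y ⟨(j:ℕ), j.isLt⟩ <;> simp_all [Fin.eta]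

lemma split_piece (f : ℕ → ℤ) {a b c : ℕ} (h1 : a ≤ b) (h2 : b ≤ c) :
    ∑ j ∈ Finset.Ico a c, f j = ∑ j ∈ Finset.Ico a b, f j + ∑ j ∈ Finset.Ico b c, f j :=
  (Finset.sum_Ico_consecutive f h1 h2).symm

lemma single (f : ℕ → ℤ) (a b : ℕ) (h : b = a + 1) :
    ∑ j ∈ Finset.Ico a b, f j = f a := by
  subst h
  rw [Finset.sum_Ico_succ_top le_rfl, Finset.Ico_self, Finset.sum_empty, zero_add]

/-- split at cuts 0, i, i+1, i+2, n -/
lemma splitC (f : ℕ → ℤ) (i n : ℕ) (h : i + 2 ≤ n) :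
    ∑ j ∈ Finset.range n, f j =
      (∑ j ∈ Finset.Ico 0 i, f j) + f i + f (i+1) + ∑ j ∈ Finset.Ico (i+2) n, f j := by
  rw [Finset.range_eq_Ico, split_piece f (Nat.zero_le i) (by omega : i ≤ n),
    split_piece f (by omega : i ≤ i+1) (by omega : i+1 ≤ n),
    split_piece f (by omega : i+1 ≤ i+2) (by omega : i+2 ≤ n),
    single f i (i+1) rfl, single f (i+1) (i+2) (by omega)]
  ring

/-- split at cuts 0, i, i+1, i+2, i'+1, i'+2, n -/
lemma splitA (f : ℕ → ℤ) (i i' n : ℕ) (h1 : i < i') (h2 : i' + 2 ≤ n) :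
    ∑ j ∈ Finset.range n, f j =
      (∑ j ∈ Finset.Ico 0 i, f j) + f i + f (i+1)
        + (∑ j ∈ Finset.Ico (i+2) (i'+1), f j) + f (i'+1)
        + ∑ j ∈ Finset.Ico (i'+2) n, f j := by
  rw [Finset.range_eq_Ico, split_piece f (Nat.zero_le i) (by omega : i ≤ n),
    split_piece f (by omega : i ≤ i+1) (by omega : i+1 ≤ n),
    split_piece f (by omega : i+1 ≤ i+2) (by omega : i+2 ≤ n),
    split_piece f (by omega : i+2 ≤ i'+1) (by omega : i'+1 ≤ n),
    split_piece f (by omega : i'+1 ≤ i'+2) (by omega : i'+2 ≤ n),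
    single f i (i+1) rfl, single f (i+1) (i+2) (by omega),
    single f (i'+1) (i'+2) (by omega)]
  ring

/-- split at cuts 0, i, i+1, i', i'+1, i'+2, n -/
lemma splitB (f : ℕ → ℤ) (i i' n : ℕ) (h1 : i < i') (h2 : i' + 2 ≤ n) :
    ∑ j ∈ Finset.range n, f j =
      (∑ j ∈ Finset.Ico 0 i, f j) + f i
        + (∑ j ∈ Finset.Ico (i+1) i', f j) + f i' + f (i'+1)
        + ∑ j ∈ Finset.Ico (i'+2) n, f j := by
  rw [Finset.range_eq_Ico, split_piece f (Nat.zero_le i) (by omega : i ≤ n),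
    split_piece f (by omega : i ≤ i+1) (by omega : i+1 ≤ n),
    split_piece f (by omega : i+1 ≤ i') (by omega : i' ≤ n),
    split_piece f (by omega : i' ≤ i'+1) (by omega : i'+1 ≤ n),
    split_piece f (by omega : i'+1 ≤ i'+2) (by omega : i'+2 ≤ n),
    single f i (i+1) rfl, single f i' (i'+1) rfl,
    single f (i'+1) (i'+2) (by omega)]
  ring

/-- arithmetic core, case i < i' -/
lemma arith1 (N i i' T p q r s b0 b1 : ℤ)
    (hN : 4 ≤ N) (hi0 : 0 ≤ i) (hi : i + 1 < N) (hi' : i' + 1 < N) (hii : i < i')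
    (hp : p = 0 ∨ p = 1) (hq : q = 0 ∨ q = 1) (hr : r = 0 ∨ r = 1) (hs : s = 0 ∨ s = 1)
    (hb0 : b0 = 0 ∨ b0 = 1) (hb1 : b1 = 0 ∨ b1 = 1)
    (hT0 : 0 ≤ T) (hT1 : T ≤ i' - i - 1)
    (hstar : (4:ℤ) ∣ (p + q + b1 - b0 - r - s))
    (hdvd : (2*N - 1) ∣ ((i+1)*p + (i+2)*q + T + (i'+2)*b1 - (i+1)*b0 - (i'+1)*r - (i'+2)*s)) :
    p = b0 ∧ s = b1 ∧ ((q = 0 ∧ r = 0 ∧ T = 0) ∨ (q = 1 ∧ r = 1 ∧ T = i' - i - 1)) := by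
  have hb0e : b0 = p + q + b1 - r - s := by
    rcases hp with rfl|rfl <;> rcases hq with rfl|rfl <;> rcases hr with rfl|rfl <;>
      rcases hs with rfl|rfl <;> rcases hb0 with rfl|rfl <;> rcases hb1 with rfl|rfl <;> omega
  have e : (i+1)*p + (i+2)*q + T + (i'+2)*b1 - (i+1)*b0 - (i'+1)*r - (i'+2)*s
      = q + (i'-i+1)*b1 - (i'-i)*r - (i'-i+1)*s + T := by
    linear_combination (-(i:ℤ)-1) * hb0e
  rw [e] at hdvd
  have hk1 : (0:ℤ) ≤ i' - i := by omega
  have hk2 : (0:ℤ) ≤ i' - i + 1 := by omega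
  have B1a : 0 ≤ (i'-i+1)*b1 := mul_nonneg hk2 (by omega)
  have B1b : (i'-i+1)*b1 ≤ (i'-i+1) := by
    calc (i'-i+1)*b1 ≤ (i'-i+1)*1 := mul_le_mul_of_nonneg_left (by omega) hk2
    _ = i'-i+1 := by ring
  have B2a : 0 ≤ (i'-i)*r := mul_nonneg hk1 (by omega)
  have B2b : (i'-i)*r ≤ (i'-i) := by
    calc (i'-i)*r ≤ (i'-i)*1 := mul_le_mul_of_nonneg_left (by omega) hk1
    _ = i'-i := by ring
  have B3a : 0 ≤ (i'-i+1)*s := mul_nonneg hk2 (by omega)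
  have B3b : (i'-i+1)*s ≤ (i'-i+1) := by
    calc (i'-i+1)*s ≤ (i'-i+1)*1 := mul_le_mul_of_nonneg_left (by omega) hk2
    _ = i'-i+1 := by ring
  have hq' : 0 ≤ q ∧ q ≤ 1 := by omega
  have hD : q + (i'-i+1)*b1 - (i'-i)*r - (i'-i+1)*s + T = 0 := by
    refine Int.eq_zero_of_abs_lt_dvd hdvd ?_
    rw [abs_lt]
    constructor <;> [linarith; linarith]
  rcases hb1 with rfl|rfl <;> rcases hs with rfl|rfl <;> rcases hr with rfl|rfl <;>
    rcases hq with rfl|rfl <;>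
    simp only [mul_zero, mul_one] at hD <;> omega

/-- arithmetic core, case i = i' -/
lemma arith0 (N i p q r s : ℤ) (hi0 : 0 ≤ i) (hi : i + 1 < N)
    (hp : p = 0 ∨ p = 1) (hq : q = 0 ∨ q = 1) (hr : r = 0 ∨ r = 1) (hs : s = 0 ∨ s = 1)
    (hstar : (4:ℤ) ∣ (p + q - r - s))
    (hdvd : (2*N - 1) ∣ ((i+1)*(p-r) + (i+2)*(q-s))) : p = r ∧ q = s := by
  have hqs : q - s = r - p := by
    rcases hp with rfl|rfl <;> rcases hq with rfl|rfl <;> rcases hr with rfl|rfl <;>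
      rcases hs with rfl|rfl <;> omega
  have e : (i+1)*(p-r) + (i+2)*(q-s) = -(p-r) := by
    linear_combination ((i:ℤ)+2) * hqs
  rw [e] at hdvd
  have hD : -(p-r) = 0 := by
    refine Int.eq_zero_of_abs_lt_dvd hdvd ?_
    rw [abs_lt]
    rcases hp with rfl|rfl <;> rcases hr with rfl|rfl <;> constructor <;> omega
  omega

lemma core (n : ℕ) (hn : 4 ≤ n) (x y : Fin n → Bool)
    (hw : (4:ℤ) ∣ (∑ j ∈ Finset.range n, B2Z x j - ∑ j ∈ Finset.range n, B2Z y j))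
    (hs : (2*(n:ℤ) - 1) ∣ (∑ j ∈ Finset.range n, ((j:ℤ)+1) * B2Z x j
        - ∑ j ∈ Finset.range n, ((j:ℤ)+1) * B2Z y j))
    (i i' : ℕ) (hi : i + 1 < n) (hi' : i' + 1 < n) (hii : i ≤ i') (a0 a1 : Bool)
    (hz : ∀ jj, ∀ hj : jj < n - 1, ∀ h1 : jj < n, ∀ h2 : jj + 1 < n,
      (if jj < i then x ⟨jj, h1⟩ else if jj = i then a0 else x ⟨jj+1, h2⟩) =
      (if jj < i' then y ⟨jj, h1⟩ else if jj = i' then a1 else y ⟨jj+1, h2⟩)) :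
    x = y := by
  have hlt : ∀ j, j < i → B2Z x j = B2Z y j := by
    intro j hj
    have hb := hz j (by omega) (by omega) (by omega)
    rw [if_pos hj, if_pos (by omega : j < i')] at hb
    rw [B2Z_lt x j (by omega), B2Z_lt y j (by omega), hb]
  have hgt : ∀ m, i' + 2 ≤ m → m < n → B2Z x m = B2Z y m := by
    intro m h1 h2
    have hb := hz (m-1) (by omega) (by omega) (by omega)
    rw [if_neg (by omega : ¬ m - 1 < i), if_neg (by omega : ¬ m - 1 = i),
      if_neg (by omega : ¬ m - 1 < i'), if_neg (by omega : ¬ m - 1 = i')] at hb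
    rw [show m = m - 1 + 1 by omega, B2Z_lt x (m-1+1) (by omega),
      B2Z_lt y (m-1+1) (by omega), hb]
  rcases Nat.lt_or_ge i i' with hio | hio
  · -- case i < i'
    have hmid : ∀ jj, i < jj → jj < i' → B2Z x (jj+1) = B2Z y jj := by
      intro jj hj1 hj2
      have hb := hz jj (by omega) (by omega) (by omega)
      rw [if_neg (by omega : ¬ jj < i), if_neg (by omega : ¬ jj = i),
        if_pos (by omega : jj < i')] at hb
      rw [B2Z_lt x (jj+1) (by omega), B2Z_lt y jj (by omega), hb]
    have hyi : B2Z y i = ((a0.toNat : ℕ) : ℤ) := by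
      have hb := hz i (by omega) (by omega) (by omega)
      rw [if_neg (by omega : ¬ i < i), if_pos rfl, if_pos hio] at hb
      rw [B2Z_lt y i (by omega), ← hb]
    have hxi' : B2Z x (i'+1) = ((a1.toNat : ℕ) : ℤ) := by
      have hb := hz i' (by omega) (by omega) (by omega)
      rw [if_neg (by omega : ¬ i' < i), if_neg (by omega : ¬ i' = i),
        if_neg (by omega : ¬ i' < i'), if_pos rfl] at hb
      rw [B2Z_lt x (i'+1) (by omega), hb]
    have c1 : ∑ j ∈ Finset.Ico 0 i, B2Z x j = ∑ j ∈ Finset.Ico 0 i, B2Z y j :=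
      Finset.sum_congr rfl fun j hj => hlt j (Finset.mem_Ico.mp hj).2
    have c2 : ∑ j ∈ Finset.Ico (i'+2) n, B2Z x j = ∑ j ∈ Finset.Ico (i'+2) n, B2Z y j :=
      Finset.sum_congr rfl fun j hj => by
        have := Finset.mem_Ico.mp hj; exact hgt j this.1 this.2
    have c3 : ∑ j ∈ Finset.Ico (i+1) i', B2Z y j = ∑ j ∈ Finset.Ico (i+2) (i'+1), B2Z x j := by
      rw [Finset.sum_Ico_eq_sum_range, Finset.sum_Ico_eq_sum_range,
        show i'+1-(i+2) = i'-(i+1) by omega]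
      refine Finset.sum_congr rfl fun m hm => ?_
      have hm' := Finset.mem_range.mp hm
      rw [show i+2+m = (i+1+m)+1 by omega]
      exact (hmid (i+1+m) (by omega) (by omega)).symm
    have c1' : ∑ j ∈ Finset.Ico 0 i, ((j:ℤ)+1) * B2Z x j
        = ∑ j ∈ Finset.Ico 0 i, ((j:ℤ)+1) * B2Z y j :=
      Finset.sum_congr rfl fun j hj => by rw [hlt j (Finset.mem_Ico.mp hj).2]
    have c2' : ∑ j ∈ Finset.Ico (i'+2) n, ((j:ℤ)+1) * B2Z x j
        = ∑ j ∈ Finset.Ico (i'+2) n, ((j:ℤ)+1) * B2Z y j :=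
      Finset.sum_congr rfl fun j hj => by
        have := Finset.mem_Ico.mp hj; rw [hgt j this.1 this.2]
    have c3' : ∑ j ∈ Finset.Ico (i+1) i', ((j:ℤ)+1) * B2Z y j
        = ∑ j ∈ Finset.Ico (i+2) (i'+1), (j:ℤ) * B2Z x j := by
      rw [Finset.sum_Ico_eq_sum_range, Finset.sum_Ico_eq_sum_range,
        show i'+1-(i+2) = i'-(i+1) by omega]
      refine Finset.sum_congr rfl fun m hm => ?_
      have hm' := Finset.mem_range.mp hm
      rw [show i+2+m = (i+1+m)+1 by omega]
      rw [hmid (i+1+m) (by omega) (by omega)]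
      push_cast; ring
    have c4 : ∑ j ∈ Finset.Ico (i+2) (i'+1), (j:ℤ) * B2Z x j
        = (∑ j ∈ Finset.Ico (i+2) (i'+1), ((j:ℤ)+1) * B2Z x j)
          - ∑ j ∈ Finset.Ico (i+2) (i'+1), B2Z x j := by
      rw [← Finset.sum_sub_distrib]
      exact Finset.sum_congr rfl fun j _ => by ring
    have eW : (∑ j ∈ Finset.range n, B2Z x j - ∑ j ∈ Finset.range n, B2Z y j)
        = B2Z x i + B2Z x (i+1) + ((a1.toNat : ℕ) : ℤ) - ((a0.toNat : ℕ) : ℤ)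
          - B2Z y i' - B2Z y (i'+1) := by
      rw [splitA (B2Z x) i i' n hio (by omega), splitB (B2Z y) i i' n hio (by omega),
        c1, c2, c3, ← hyi, ← hxi']
      ring
    have eS : (∑ j ∈ Finset.range n, ((j:ℤ)+1) * B2Z x j
          - ∑ j ∈ Finset.range n, ((j:ℤ)+1) * B2Z y j)
        = ((i:ℤ)+1) * B2Z x i + ((i:ℤ)+2) * B2Z x (i+1)
          + (∑ j ∈ Finset.Ico (i+2) (i'+1), B2Z x j)
          + ((i':ℤ)+2) * ((a1.toNat : ℕ) : ℤ) - ((i:ℤ)+1) * ((a0.toNat : ℕ) : ℤ)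
          - ((i':ℤ)+1) * B2Z y i' - ((i':ℤ)+2) * B2Z y (i'+1) := by
      rw [splitA (fun j => ((j:ℤ)+1) * B2Z x j) i i' n hio (by omega),
        splitB (fun j => ((j:ℤ)+1) * B2Z y j) i i' n hio (by omega),
        c1', c2', c3', c4, ← hyi, ← hxi']
      push_cast
      ring
    rw [eW] at hw
    rw [eS] at hs
    have hT0 : 0 ≤ ∑ j ∈ Finset.Ico (i+2) (i'+1), B2Z x j :=
      Finset.sum_nonneg fun j _ => B2Z_nonneg x j
    have hT1 : ∑ j ∈ Finset.Ico (i+2) (i'+1), B2Z x j ≤ (i':ℤ) - i - 1 := by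
      have h := Finset.sum_le_card_nsmul (Finset.Ico (i+2) (i'+1)) (B2Z x) 1
        (fun j _ => B2Z_le_one x j)
      rw [Nat.card_Ico, nsmul_eq_mul, mul_one] at h
      have hcast : ((i'+1-(i+2):ℕ):ℤ) = (i':ℤ) - (i:ℤ) - 1 := by omega
      rw [hcast] at h
      exact h
    have hb0d : ((a0.toNat : ℕ) : ℤ) = 0 ∨ ((a0.toNat : ℕ) : ℤ) = 1 := by
      cases a0 <;> simp
    have hb1d : ((a1.toNat : ℕ) : ℤ) = 0 ∨ ((a1.toNat : ℕ) : ℤ) = 1 := by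
      cases a1 <;> simp
    obtain ⟨hp, hsb, hsc⟩ := arith1 (n:ℤ) i i' (∑ j ∈ Finset.Ico (i+2) (i'+1), B2Z x j)
      (B2Z x i) (B2Z x (i+1)) (B2Z y i') (B2Z y (i'+1))
      ((a0.toNat : ℕ) : ℤ) ((a1.toNat : ℕ) : ℤ)
      (by exact_mod_cast hn) (by positivity) (by exact_mod_cast hi) (by exact_mod_cast hi')
      (by exact_mod_cast hio)
      (B2Z_bool x i (by omega)) (B2Z_bool x (i+1) (by omega))
      (B2Z_bool y i' (by omega)) (B2Z_bool y (i'+1) (by omega)) hb0d hb1d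
      hT0 hT1 hw hs
    apply eq_of_B2Z
    intro m hm
    rcases Nat.lt_or_ge m i with h | h
    · exact hlt m h
    rcases Nat.eq_or_lt_of_le h with h | h
    · rw [← h, hp, hyi]
    rcases Nat.lt_or_ge m (i'+1) with h2 | h2
    · -- i+1 ≤ m ≤ i'
      rcases hsc with ⟨hq, hr, hT⟩ | ⟨hq, hr, hT⟩
      · have hx0 : ∀ jj, i+1 ≤ jj → jj ≤ i' → B2Z x jj = 0 := by
          intro jj hj1 hj2
          rcases Nat.eq_or_lt_of_le hj1 with h3 | h3
          · rw [← h3]; exact hq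
          · exact (Finset.sum_eq_zero_iff_of_nonneg
              (fun j _ => B2Z_nonneg x j)).mp hT jj (Finset.mem_Ico.mpr ⟨by omega, by omega⟩)
        have hxm : B2Z x m = 0 := hx0 m (by omega) (by omega)
        have hym : B2Z y m = 0 := by
          rcases Nat.lt_or_ge m i' with h4 | h4
          · rw [← hmid m (by omega) h4]; exact hx0 (m+1) (by omega) (by omega)
          · have : m = i' := by omega
            rw [this]; exact hr
        rw [hxm, hym]
      · have hx1 : ∀ jj, i+1 ≤ jj → jj ≤ i' → B2Z x jj = 1 := by
          intro jj hj1 hj2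
          rcases Nat.eq_or_lt_of_le hj1 with h3 | h3
          · rw [← h3]; exact hq
          · have h0 : ∑ j ∈ Finset.Ico (i+2) (i'+1), (1 - B2Z x j) = 0 := by
              rw [Finset.sum_sub_distrib, Finset.sum_const, Nat.card_Ico,
                nsmul_eq_mul, mul_one, hT]
              omega
            have := (Finset.sum_eq_zero_iff_of_nonneg
              (fun j _ => by have := B2Z_le_one x j; omega)).mp h0 jj
              (Finset.mem_Ico.mpr ⟨by omega, by omega⟩)
            omega
        have hxm : B2Z x m = 1 := hx1 m (by omega) (by omega)
        have hym : B2Z y m = 1 := by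
          rcases Nat.lt_or_ge m i' with h4 | h4
          · rw [← hmid m (by omega) h4]; exact hx1 (m+1) (by omega) (by omega)
          · have : m = i' := by omega
            rw [this]; exact hr
        rw [hxm, hym]
    rcases Nat.eq_or_lt_of_le h2 with h3 | h3
    · rw [← h3, hxi', hsb]
    · exact hgt m (by omega) hm
  · -- case i = i'
    have hie : i = i' := by omega
    subst hie
    have c1 : ∑ j ∈ Finset.Ico 0 i, B2Z x j = ∑ j ∈ Finset.Ico 0 i, B2Z y j :=
      Finset.sum_congr rfl fun j hj => hlt j (Finset.mem_Ico.mp hj).2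
    have c2 : ∑ j ∈ Finset.Ico (i+2) n, B2Z x j = ∑ j ∈ Finset.Ico (i+2) n, B2Z y j :=
      Finset.sum_congr rfl fun j hj => by
        have := Finset.mem_Ico.mp hj; exact hgt j this.1 this.2
    have c1' : ∑ j ∈ Finset.Ico 0 i, ((j:ℤ)+1) * B2Z x j
        = ∑ j ∈ Finset.Ico 0 i, ((j:ℤ)+1) * B2Z y j :=
      Finset.sum_congr rfl fun j hj => by rw [hlt j (Finset.mem_Ico.mp hj).2]
    have c2' : ∑ j ∈ Finset.Ico (i+2) n, ((j:ℤ)+1) * B2Z x j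
        = ∑ j ∈ Finset.Ico (i+2) n, ((j:ℤ)+1) * B2Z y j :=
      Finset.sum_congr rfl fun j hj => by
        have := Finset.mem_Ico.mp hj; rw [hgt j this.1 this.2]
    have eW : (∑ j ∈ Finset.range n, B2Z x j - ∑ j ∈ Finset.range n, B2Z y j)
        = B2Z x i + B2Z x (i+1) - B2Z y i - B2Z y (i+1) := by
      rw [splitC (B2Z x) i n (by omega), splitC (B2Z y) i n (by omega), c1, c2]
      ring
    have eS : (∑ j ∈ Finset.range n, ((j:ℤ)+1) * B2Z x j
          - ∑ j ∈ Finset.range n, ((j:ℤ)+1) * B2Z y j)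
        = ((i:ℤ)+1) * (B2Z x i - B2Z y i) + ((i:ℤ)+2) * (B2Z x (i+1) - B2Z y (i+1)) := by
      rw [splitC (fun j => ((j:ℤ)+1) * B2Z x j) i n (by omega),
        splitC (fun j => ((j:ℤ)+1) * B2Z y j) i n (by omega), c1', c2']
      push_cast
      ring
    rw [eW] at hw
    rw [eS] at hs
    obtain ⟨hp, hq⟩ := arith0 (n:ℤ) i (B2Z x i) (B2Z x (i+1)) (B2Z y i) (B2Z y (i+1))
      (by positivity) (by exact_mod_cast hi)
      (B2Z_bool x i (by omega)) (B2Z_bool x (i+1) (by omega))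
      (B2Z_bool y i (by omega)) (B2Z_bool y (i+1) (by omega))
      hw hs
    apply eq_of_B2Z
    intro m hm
    rcases Nat.lt_or_ge m i with h | h
    · exact hlt m h
    rcases Nat.eq_or_lt_of_le h with h | h
    · rw [← h]; exact hp
    rcases Nat.eq_or_lt_of_le h with h2 | h2
    · rw [← h2]; exact hq
    · exact hgt m (by omega) hm

lemma castW {n : ℕ} (x : Fin n → Bool) :
    ((∑ i : Fin n, (x i).toNat : ℕ) : ℤ) = ∑ j ∈ Finset.range n, B2Z x j := by
  rw [← Fin.sum_univ_eq_sum_range (B2Z x) n]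
  push_cast
  exact Finset.sum_congr rfl fun i _ => (B2Z_lt x i i.isLt).symm

lemma castS {n : ℕ} (x : Fin n → Bool) :
    ((∑ i : Fin n, ((i : ℕ) + 1) * (x i).toNat : ℕ) : ℤ)
      = ∑ j ∈ Finset.range n, ((j:ℤ)+1) * B2Z x j := by
  rw [← Fin.sum_univ_eq_sum_range (fun j => ((j:ℤ)+1) * B2Z x j) n]
  push_cast
  exact Finset.sum_congr rfl fun i _ => by rw [B2Z_lt x i i.isLt]

/-- for `n ≥ 4`, `a ∈ ℤ_{2n−1}`, `c ∈ ℤ₄`, the code `C_{2,1}(n,a,c)` is a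
`(2,1)`-burst-correcting code. -/
theorem C21_is_21_burst_correcting (n a c : ℕ) (hn : 4 ≤ n)
    (ha : a < 2 * n - 1) (hc : c < 4) :
    ∀ x ∈ C21 n a c, ∀ y ∈ C21 n a c, x ≠ y → d21Ball x ∩ d21Ball y = ∅ := by
  intro x hx y hy hxy
  rw [Set.eq_empty_iff_forall_notMem]
  rintro z ⟨⟨i, hi, a0, hzx⟩, ⟨i', hi', a1, hzy⟩⟩
  have hwxy : (4:ℤ) ∣ (∑ j ∈ Finset.range n, B2Z x j - ∑ j ∈ Finset.range n, B2Z y j) := by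
    rw [← castW x, ← castW y]
    exact (hy.1.trans hx.1.symm).dvd
  have hmcast : ((2*n-1 : ℕ) : ℤ) = 2*(n:ℤ) - 1 := by omega
  have hsxy : (2*(n:ℤ) - 1) ∣ (∑ j ∈ Finset.range n, ((j:ℤ)+1) * B2Z x j
      - ∑ j ∈ Finset.range n, ((j:ℤ)+1) * B2Z y j) := by
    rw [← castS x, ← castS y, ← hmcast]
    exact (hy.2.trans hx.2.symm).dvd
  have hz : ∀ jj, ∀ hj : jj < n - 1, ∀ h1 : jj < n, ∀ h2 : jj + 1 < n,
      (if jj < i then x ⟨jj, h1⟩ else if jj = i then a0 else x ⟨jj+1, h2⟩) =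
      (if jj < i' then y ⟨jj, h1⟩ else if jj = i' then a1 else y ⟨jj+1, h2⟩) := by
    intro jj hj h1 h2
    exact (hzx ⟨jj, hj⟩).symm.trans (hzy ⟨jj, hj⟩)
  rcases le_or_gt i i' with h | h
  · exact hxy (core n hn x y hwxy hsxy i i' hi hi' h a0 a1 hz)
  · refine hxy (core n hn y x (dvd_sub_comm.mp hwxy) (dvd_sub_comm.mp hsxy)
      i' i hi' hi (by omega) a1 a0 (fun jj hj h1 h2 => (hz jj hj h1 h2).symm)).symm
end

section
/- For every n ≥ 4 there exist a ∈ ℤ_{2n−1} and c ∈ ℤ₄ such that |C_{2,1}(n,a,c)| ≥ 2ⁿ / (4(2n−1)); in particular the redundancy of this (2,1)-burst-correcting code is at most log₂(4(2n−1)) < log₂(n) + 3 bits. -/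
/-- for `n ≥ 4` there exist `a ∈ ℤ_{2n−1}` and `c ∈ ℤ₄` with
`|C_{2,1}(n,a,c)| ≥ 2ⁿ/(4(2n−1))`, i.e., redundancy at most
`log₂(4(2n−1)) < log₂ n + 3` bits. -/
theorem exists_C21_large (n : ℕ) (hn : 4 ≤ n) :
    ∃ a < 2 * n - 1, ∃ c < 4,
      ((C21 n a c).ncard : ℝ) ≥ (2 : ℝ) ^ n / (4 * (2 * (n : ℝ) - 1)) := by
  classical
  set M := 2 * n - 1 with hM
  have hMpos : 0 < M := by omega
  set g : (Fin n → Bool) → ℕ × ℕ := fun x =>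
    ((∑ i : Fin n, (x i).toNat) % 4, (∑ i : Fin n, ((i : ℕ) + 1) * (x i).toNat) % M) with hg
  set t : Finset (ℕ × ℕ) := Finset.range 4 ×ˢ Finset.range M with ht
  have hmaps : ∀ x ∈ (Finset.univ : Finset (Fin n → Bool)), g x ∈ t := by
    intro x _
    simp only [ht, hg, Finset.mem_product, Finset.mem_range]
    exact ⟨Nat.mod_lt _ (by norm_num), Nat.mod_lt _ hMpos⟩
  have hsum : ∑ y ∈ t, (Finset.univ.filter (fun x : Fin n → Bool => g x = y)).card
      = 2 ^ n := by
    rw [← Finset.card_eq_sum_card_fiberwise hmaps]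
    simp [Finset.card_univ]
  have htcard : t.card = 4 * M := by simp [ht]
  have hne : t.Nonempty := by
    refine ⟨(0, 0), ?_⟩
    simp [ht, hMpos]
  have hex : ∃ y ∈ t, 2 ^ n ≤
      t.card * (Finset.univ.filter (fun x : Fin n → Bool => g x = y)).card := by
    by_contra h
    push_neg at h
    have : ∑ y ∈ t, t.card * (Finset.univ.filter
        (fun x : Fin n → Bool => g x = y)).card < ∑ _y ∈ t, 2 ^ n := by
      apply Finset.sum_lt_sum_of_nonempty hne
      intro y hy; exact h y hy
    rw [← Finset.mul_sum, hsum, Finset.sum_const, smul_eq_mul, mul_comm] at this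
    omega
  obtain ⟨⟨c, a⟩, hyt, hy⟩ := hex
  simp only [ht, Finset.mem_product, Finset.mem_range] at hyt
  refine ⟨a, hyt.2, c, hyt.1, ?_⟩
  have hset : C21 n a c = ↑(Finset.univ.filter (fun x : Fin n → Bool => g x = (c, a))) := by
    ext x
    simp only [C21, Set.mem_setOf_eq, Finset.coe_filter, Finset.mem_univ, true_and,
      hg, Prod.mk.injEq, Set.mem_setOf_eq]
    constructor
    · rintro ⟨h1, h2⟩
      have e1 : (∑ i : Fin n, (x i).toNat) % 4 = c % 4 := h1
      have e2 : (∑ i : Fin n, ((i : ℕ) + 1) * (x i).toNat) % M = a % M := h2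
      rw [Nat.mod_eq_of_lt hyt.1] at e1
      rw [Nat.mod_eq_of_lt hyt.2] at e2
      exact ⟨e1, e2⟩
    · rintro ⟨e1, e2⟩
      constructor
      · show (∑ i : Fin n, (x i).toNat) % 4 = c % 4
        rw [Nat.mod_eq_of_lt hyt.1]; exact e1
      · show (∑ i : Fin n, ((i : ℕ) + 1) * (x i).toNat) % M = a % M
        rw [Nat.mod_eq_of_lt hyt.2]; exact e2
  rw [hset, Set.ncard_coe_finset]
  rw [htcard] at hy
  have hMr : ((2 : ℝ) * n - 1) = (M : ℝ) := by
    rw [hM]; push_cast [Nat.cast_sub (by omega : 1 ≤ 2 * n)]; ring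
  rw [hMr, ge_iff_le, div_le_iff₀ (by positivity)]
  calc (2 : ℝ) ^ n = ((2 ^ n : ℕ) : ℝ) := by push_cast; ring
    _ ≤ ((4 * M * (Finset.univ.filter (fun x : Fin n → Bool => g x = (c, a))).card : ℕ) : ℝ) :=
        by exact_mod_cast hy
    _ = _ := by push_cast; ring
end

section
/- Let 6 divide n with n/2 ≥ 4. Let C₃ ⊆ 𝔽₂ⁿ be a 3-burst-deletion-correcting code, let 0 ≤ a₁ ≤ n, a₂, a₃ ∈ ℤ_{n−1}, and c₂, c₃ ∈ ℤ₄. Then the code C = { x ∈ 𝔽₂ⁿ : x ∈ VT_{a₁}(n), x ∈ C₃, A₂(x)₁ ∈ C_{2,1}(n/2, a₂, c₂), A₂(x)₂ ∈ C_{2,1}(n/2, a₃, c₃) } can correct a non-consecutive deletion burst of size at most three: for all distinct x, y ∈ C and all 1 ≤ a ≤ 3, D^{nc}_{a,3}(x) ∩ D^{nc}_{a,3}(y) = ∅. -/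
/-- The code of Construction 5 for correcting a non-consecutive deletion burst of size at
most three. -/
def code18 (n : ℕ) (C3 : Set (Fin n → Bool)) (a1 a2 a3 c2 c3 : ℕ) :
    Set (Fin n → Bool) :=
  { x | x ∈ VT n a1 ∧ x ∈ C3 ∧
        arrRow 2 x (0 : Fin 2) ∈ C21 (n / 2) a2 c2 ∧
        arrRow 2 x (1 : Fin 2) ∈ C21 (n / 2) a3 c3 }

section helpers18
open Finset

/-- number of `p : Fin n` with value less than `k`. -/
lemma card_filter_val_lt (n k : ℕ) (hk : k ≤ n) :
    ((Finset.univ : Finset (Fin n)).filter (fun p : Fin n => (p : ℕ) < k)).card = k := by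
  classical
  rcases Nat.eq_zero_or_pos n with hn | hn
  · subst hn
    simp [Finset.filter_eq_empty_iff]
    omega
  have : ((Finset.univ : Finset (Fin n)).filter (fun p : Fin n => (p : ℕ) < k))
      = (Finset.range k).image (fun i => (⟨i % n, Nat.mod_lt _ hn⟩ : Fin n)) := by
    ext p
    simp only [mem_filter, mem_univ, true_and, mem_image, mem_range]
    constructor
    · intro hp
      refine ⟨(p : ℕ), by omega, ?_⟩
      ext
      simp [Nat.mod_eq_of_lt p.isLt]
    · rintro ⟨i, hi, rfl⟩
      simp [Nat.mod_eq_of_lt (by omega : i < n)]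
      omega
  rw [this, Finset.card_image_of_injOn, Finset.card_range]
  intro a ha b hb hab
  simp only [mem_coe, mem_range] at ha hb
  have : a % n = b % n := congrArg Fin.val hab
  rw [Nat.mod_eq_of_lt (by omega), Nat.mod_eq_of_lt (by omega)] at this
  exact this

lemma sum_del (h g : ℕ → ℕ) (m p : ℕ) (hp : p ≤ m)
    (hrel : ∀ i, i < m → g i = if i < p then h i else h (i + 1)) :
    (∑ i ∈ Finset.range (m + 1), (i + 1) * h i)
      = (∑ i ∈ Finset.range m, (i + 1) * g i) + (∑ i ∈ Finset.Ico p m, g i)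
        + (p + 1) * h p := by
  have e1 : (∑ i ∈ Finset.range m, (i + 1) * g i)
      = (∑ i ∈ Finset.range p, (i + 1) * h i) + ∑ i ∈ Finset.Ico p m, (i + 1) * h (i + 1) := by
    rw [Finset.range_eq_Ico, ← Finset.sum_Ico_consecutive _ (Nat.zero_le p) hp,
      ← Finset.range_eq_Ico]
    congr 1
    · exact Finset.sum_congr rfl (fun i hi => by
        rw [hrel i (by simp at hi; omega)]
        simp at hi; rw [if_pos (by omega)])
    · exact Finset.sum_congr rfl (fun i hi => by
        simp at hi
        rw [hrel i (by omega), if_neg (by omega)])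
  have e2 : (∑ i ∈ Finset.range (m + 1), (i + 1) * h i)
      = (∑ i ∈ Finset.range p, (i + 1) * h i) + (p + 1) * h p
        + ∑ i ∈ Finset.Ico (p + 1) (m + 1), (i + 1) * h i := by
    rw [Finset.range_eq_Ico, ← Finset.sum_Ico_consecutive _ (Nat.zero_le p) (by omega : p ≤ m + 1),
      ← Finset.range_eq_Ico, Finset.sum_eq_sum_Ico_succ_bot (by omega : p < m + 1)]
    ring
  have e3 : (∑ i ∈ Finset.Ico (p + 1) (m + 1), (i + 1) * h i)
      = ∑ i ∈ Finset.Ico p m, (i + 2) * h (i + 1) := by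
    rw [Finset.sum_Ico_eq_sum_range, Finset.sum_Ico_eq_sum_range]
    have : m + 1 - (p + 1) = m - p := by omega
    rw [this]
    exact Finset.sum_congr rfl (fun i _ => by ring_nf)
  have e4 : (∑ i ∈ Finset.Ico p m, (i + 2) * h (i + 1))
      = (∑ i ∈ Finset.Ico p m, (i + 1) * h (i + 1)) + ∑ i ∈ Finset.Ico p m, h (i + 1) := by
    rw [← Finset.sum_add_distrib]
    exact Finset.sum_congr rfl (fun i _ => by ring)
  have e5 : (∑ i ∈ Finset.Ico p m, h (i + 1)) = ∑ i ∈ Finset.Ico p m, g i :=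
    Finset.sum_congr rfl (fun i hi => by
      simp at hi; rw [hrel i (by omega), if_neg (by omega)])
  rw [e2, e3, e4, e5, e1]; ring

lemma sum_d21 (h g : ℕ → ℕ) (m k : ℕ) (hk : k < m) (a : ℕ)
    (hrel : ∀ i, i < m → g i = if i < k then h i else if i = k then a else h (i + 1)) :
    (∑ i ∈ Finset.range (m + 1), (i + 1) * h i) + (k + 1) * a
      = (∑ i ∈ Finset.range m, (i + 1) * g i) + (∑ i ∈ Finset.Ico (k + 1) m, g i)
        + (k + 1) * h k + (k + 2) * h (k + 1) := by
  have e2 : (∑ i ∈ Finset.range (m + 1), (i + 1) * h i)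
      = (∑ i ∈ Finset.range k, (i + 1) * h i) + (k + 1) * h k + (k + 2) * h (k + 1)
        + ∑ i ∈ Finset.Ico (k + 2) (m + 1), (i + 1) * h i := by
    rw [Finset.range_eq_Ico, ← Finset.sum_Ico_consecutive _ (Nat.zero_le k) (by omega : k ≤ m + 1),
      ← Finset.range_eq_Ico, Finset.sum_eq_sum_Ico_succ_bot (by omega : k < m + 1),
      Finset.sum_eq_sum_Ico_succ_bot (by omega : k + 1 < m + 1)]
    ring
  have e3 : (∑ i ∈ Finset.Ico (k + 2) (m + 1), (i + 1) * h i)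
      = ∑ i ∈ Finset.Ico (k + 1) m, (i + 2) * h (i + 1) := by
    rw [Finset.sum_Ico_eq_sum_range, Finset.sum_Ico_eq_sum_range]
    have : m + 1 - (k + 2) = m - (k + 1) := by omega
    rw [this]
    exact Finset.sum_congr rfl (fun i _ => by ring_nf)
  have e1 : (∑ i ∈ Finset.range m, (i + 1) * g i)
      = (∑ i ∈ Finset.range k, (i + 1) * h i) + (k + 1) * a
        + ∑ i ∈ Finset.Ico (k + 1) m, (i + 1) * h (i + 1) := by
    rw [Finset.range_eq_Ico, ← Finset.sum_Ico_consecutive _ (Nat.zero_le k) (by omega : k ≤ m),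
      ← Finset.range_eq_Ico, Finset.sum_eq_sum_Ico_succ_bot (by omega : k < m)]
    have h1 : (∑ i ∈ Finset.range k, (i + 1) * g i) = ∑ i ∈ Finset.range k, (i + 1) * h i :=
      Finset.sum_congr rfl (fun i hi => by
        simp at hi; rw [hrel i (by omega), if_pos (by omega)])
    have h2 : g k = a := by rw [hrel k hk]; simp
    have h3 : (∑ i ∈ Finset.Ico (k + 1) m, (i + 1) * g i)
        = ∑ i ∈ Finset.Ico (k + 1) m, (i + 1) * h (i + 1) :=
      Finset.sum_congr rfl (fun i hi => by
        simp at hi; rw [hrel i (by omega), if_neg (by omega), if_neg (by omega)])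
    rw [h1, h2, h3]; ring
  have e5 : (∑ i ∈ Finset.Ico (k + 1) m, g i) = ∑ i ∈ Finset.Ico (k + 1) m, h (i + 1) :=
    Finset.sum_congr rfl (fun i hi => by
      simp at hi; rw [hrel i (by omega), if_neg (by omega), if_neg (by omega)])
  have e4 : (∑ i ∈ Finset.Ico (k + 1) m, (i + 2) * h (i + 1))
      = (∑ i ∈ Finset.Ico (k + 1) m, (i + 1) * h (i + 1)) + ∑ i ∈ Finset.Ico (k + 1) m, h (i + 1) := by
    rw [← Finset.sum_add_distrib]
    exact Finset.sum_congr rfl (fun i _ => by ring)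
  rw [e2, e3, e4, e1, e5]; ring

lemma sum_d21_wt (h g : ℕ → ℕ) (m k : ℕ) (hk : k < m) (a : ℕ)
    (hrel : ∀ i, i < m → g i = if i < k then h i else if i = k then a else h (i + 1)) :
    (∑ i ∈ Finset.range (m + 1), h i) + a
      = (∑ i ∈ Finset.range m, g i) + h k + h (k + 1) := by
  have e2 : (∑ i ∈ Finset.range (m + 1), h i)
      = (∑ i ∈ Finset.range k, h i) + h k + h (k + 1)
        + ∑ i ∈ Finset.Ico (k + 2) (m + 1), h i := by
    rw [Finset.range_eq_Ico, ← Finset.sum_Ico_consecutive _ (Nat.zero_le k) (by omega : k ≤ m + 1),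
      ← Finset.range_eq_Ico, Finset.sum_eq_sum_Ico_succ_bot (by omega : k < m + 1),
      Finset.sum_eq_sum_Ico_succ_bot (by omega : k + 1 < m + 1)]
    ring
  have e3 : (∑ i ∈ Finset.Ico (k + 2) (m + 1), h i) = ∑ i ∈ Finset.Ico (k + 1) m, h (i + 1) := by
    rw [Finset.sum_Ico_eq_sum_range, Finset.sum_Ico_eq_sum_range]
    have : m + 1 - (k + 2) = m - (k + 1) := by omega
    rw [this]
    exact Finset.sum_congr rfl (fun i _ => by ring_nf)
  have e1 : (∑ i ∈ Finset.range m, g i)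
      = (∑ i ∈ Finset.range k, h i) + a + ∑ i ∈ Finset.Ico (k + 1) m, h (i + 1) := by
    rw [Finset.range_eq_Ico, ← Finset.sum_Ico_consecutive _ (Nat.zero_le k) (by omega : k ≤ m),
      ← Finset.range_eq_Ico, Finset.sum_eq_sum_Ico_succ_bot (by omega : k < m)]
    have h1 : (∑ i ∈ Finset.range k, g i) = ∑ i ∈ Finset.range k, h i :=
      Finset.sum_congr rfl (fun i hi => by
        simp at hi; rw [hrel i (by omega), if_pos (by omega)])
    have h2 : g k = a := by rw [hrel k hk]; simp
    have h3 : (∑ i ∈ Finset.Ico (k + 1) m, g i) = ∑ i ∈ Finset.Ico (k + 1) m, h (i + 1) :=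
      Finset.sum_congr rfl (fun i hi => by
        simp at hi; rw [hrel i (by omega), if_neg (by omega), if_neg (by omega)])
    rw [h1, h2, h3]; ring
  rw [e2, e3, e1]; ring


/-- characterization of strict monotone maps between Fin types via missing elements -/
lemma strictMono_fin_char {m n : ℕ} (f : Fin m → Fin n) (hf : StrictMono f) (j : Fin m) :
    (f j : ℕ) = (j : ℕ) +
      ((Finset.univ \ Finset.image f Finset.univ).filter
          (fun p : Fin n => (p : ℕ) < (f j : ℕ))).card := by
  classical
  have key : ((Finset.univ : Finset (Fin n)).filter (fun p : Fin n => (p : ℕ) < (f j : ℕ)))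
      = ((Finset.image f Finset.univ).filter (fun p : Fin n => (p : ℕ) < (f j : ℕ)))
        ∪ ((Finset.univ \ Finset.image f Finset.univ).filter
            (fun p : Fin n => (p : ℕ) < (f j : ℕ))) := by
    rw [← Finset.filter_union]
    congr 1
    rw [Finset.union_sdiff_of_subset (Finset.subset_univ _)]
  have hdisj : Disjoint
      ((Finset.image f Finset.univ).filter (fun p : Fin n => (p : ℕ) < (f j : ℕ)))
      ((Finset.univ \ Finset.image f Finset.univ).filter
          (fun p : Fin n => (p : ℕ) < (f j : ℕ))) := by
    apply Finset.disjoint_filter_filter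
    exact Finset.disjoint_sdiff
  have h1 : ((Finset.univ : Finset (Fin n)).filter
      (fun p : Fin n => (p : ℕ) < (f j : ℕ))).card = (f j : ℕ) :=
    card_filter_val_lt n _ (by omega)
  have h2 : ((Finset.image f Finset.univ).filter
      (fun p : Fin n => (p : ℕ) < (f j : ℕ))).card = (j : ℕ) := by
    have : ((Finset.image f Finset.univ).filter (fun p : Fin n => (p : ℕ) < (f j : ℕ)))
        = Finset.image f (Finset.univ.filter (fun k : Fin m => (k : ℕ) < (j : ℕ))) := by
      ext p
      simp only [mem_filter, mem_image, mem_univ, true_and]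
      constructor
      · rintro ⟨⟨k, rfl⟩, hlt⟩
        refine ⟨k, ?_, rfl⟩
        by_contra hk
        have : j ≤ k := by
          apply Fin.le_def.mpr; omega
        have := hf.le_iff_le.mpr this
        omega
      · rintro ⟨k, hk, rfl⟩
        refine ⟨⟨k, rfl⟩, ?_⟩
        have : k < j := by apply Fin.lt_def.mpr; omega
        exact hf this
    rw [this, Finset.card_image_of_injective _ hf.injective, card_filter_val_lt m _ (by omega)]
  have := congrArg Finset.card key
  rw [Finset.card_union_of_disjoint hdisj, h1, h2] at this
  omega

lemma missing_notmem_range {m n : ℕ} (f : Fin m → Fin n) (p : Fin n) :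
    p ∈ (Finset.univ \ Finset.image f Finset.univ) ↔ p ∉ Set.range f := by
  simp [Set.mem_range, eq_comm]

lemma missing_card {m n : ℕ} (f : Fin m → Fin n) (hinj : Function.Injective f) :
    (Finset.univ \ Finset.image f Finset.univ).card = n - m := by
  rw [Finset.card_sdiff_of_subset (Finset.subset_univ _),
    Finset.card_image_of_injective _ hinj]
  simp

lemma sum_bits_all_one {g : ℕ → ℕ} {a b : ℕ} (hb : ∀ j, a ≤ j → j < b → g j ≤ 1)
    (hsum : (∑ i ∈ Finset.Ico a b, g i) = b - a) :
    ∀ j, a ≤ j → j < b → g j = 1 := by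
  intro j hj1 hj2
  by_contra hne
  have hg0 : g j = 0 := by have := hb j hj1 hj2; omega
  have hmem : j ∈ Finset.Ico a b := by simp; omega
  have := Finset.add_sum_erase _ g hmem
  have hle : (∑ i ∈ (Finset.Ico a b).erase j, g i) ≤ ((Finset.Ico a b).erase j).card * 1 := by
    apply Finset.sum_le_card_nsmul
    intro x hx
    simp at hx
    exact hb x (by omega) (by omega)
  rw [Finset.card_erase_of_mem hmem] at hle
  simp [Nat.card_Ico] at hle
  omega

lemma sum_bits_all_zero {g : ℕ → ℕ} {a b : ℕ}
    (hsum : (∑ i ∈ Finset.Ico a b, g i) = 0) :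
    ∀ j, a ≤ j → j < b → g j = 0 := by
  intro j hj1 hj2
  exact Finset.sum_eq_zero_iff.mp hsum j (by simp; omega)



def toF {k : ℕ} (x : Fin k → Bool) : ℕ → ℕ := fun i => if h : i < k then (x ⟨i, h⟩).toNat else 0

lemma toF_lt {k : ℕ} (x : Fin k → Bool) {i : ℕ} (h : i < k) : toF x i = (x ⟨i, h⟩).toNat :=
  dif_pos h

lemma toF_le_one {k : ℕ} (x : Fin k → Bool) (i : ℕ) : toF x i ≤ 1 := by
  unfold toF
  split
  · rename_i h; cases x ⟨i, h⟩ <;> simp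
  · omega

lemma toNat_inj {a b : Bool} (h : a.toNat = b.toNat) : a = b := by
  cases a <;> cases b <;> simp_all

lemma sum_toF_weighted {k : ℕ} (x : Fin k → Bool) :
    (∑ i : Fin k, ((i : ℕ) + 1) * (x i).toNat) = ∑ i ∈ Finset.range k, (i + 1) * toF x i := by
  rw [← Fin.sum_univ_eq_sum_range (fun i => (i + 1) * toF x i) k]
  exact Finset.sum_congr rfl (fun i _ => by rw [toF_lt x i.isLt])

lemma sum_toF {k : ℕ} (x : Fin k → Bool) :
    (∑ i : Fin k, (x i).toNat) = ∑ i ∈ Finset.range k, toF x i := by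
  rw [← Fin.sum_univ_eq_sum_range (fun i => toF x i) k]
  exact Finset.sum_congr rfl (fun i _ => by rw [toF_lt x i.isLt])

/-- single deletion result is in the d21 ball -/
lemma del_mem_d21 {m : ℕ} (hm : 2 ≤ m) (u : Fin m → Bool) (w : Fin (m - 1) → Bool)
    (k : ℕ) (hk : k < m)
    (hw : ∀ c : Fin (m - 1), w c = if (c : ℕ) < k
      then u ⟨(c : ℕ), by have := c.isLt; omega⟩
      else u ⟨(c : ℕ) + 1, by have := c.isLt; omega⟩) :
    w ∈ (d21Ball u : Set (Fin (m - 1) → Bool)) := by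
  by_cases hk1 : k + 1 < m
  · refine ⟨k, hk1, u ⟨k + 1, hk1⟩, fun j => ?_⟩
    rw [hw j]
    by_cases h1 : (j : ℕ) < k
    · rw [if_pos h1, if_pos h1]
    · rw [if_neg h1, if_neg h1]
      by_cases h2 : (j : ℕ) = k
      · rw [if_pos h2]; congr 1; exact Fin.ext (by simp [h2])
      · rw [if_neg h2]
  · have hkm : k = m - 1 := by omega
    refine ⟨m - 2, by omega, u ⟨m - 2, by omega⟩, fun j => ?_⟩
    have hj : (j : ℕ) < m - 1 := j.isLt
    rw [hw j, if_pos (by omega)]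
    by_cases h1 : (j : ℕ) < m - 2
    · rw [if_pos h1]
    · rw [if_neg h1, if_pos (by omega : (j:ℕ) = m - 2)]
      congr 1; exact Fin.ext (by simp; omega)


lemma mem_missing (f : Fin m → Fin n) (p : Fin n) :
    p ∈ (Finset.univ \ Finset.image f Finset.univ) ↔ p ∉ Set.range f := by
  simp [Set.mem_range, eq_comm]

lemma notmem_range_of_missing (f : Fin m → Fin n) {p : Fin n}
    (h : p ∈ (Finset.univ \ Finset.image f Finset.univ)) (j : Fin m) : (f j : ℕ) ≠ (p : ℕ) := by
  intro hc
  rw [mem_missing] at h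
  exact h ⟨j, Fin.ext hc⟩

lemma closed1 {n : ℕ} (hn : 1 ≤ n) (f : Fin (n - 1) → Fin n) (hf : StrictMono f) :
    ∃ p, p < n ∧ ∀ j : Fin (n - 1), (f j : ℕ) = if (j : ℕ) < p then (j : ℕ) else (j : ℕ) + 1 := by
  classical
  have hcard : (Finset.univ \ Finset.image f Finset.univ).card = 1 := by
    rw [missing_card f hf.injective]; omega
  obtain ⟨P, hP⟩ := Finset.card_eq_one.mp hcard
  refine ⟨(P : ℕ), P.isLt, fun j => ?_⟩
  have hchar := strictMono_fin_char f hf j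
  rw (occs := .pos [1]) [hP] at hchar
  rw [Finset.filter_singleton] at hchar
  have hne : (f j : ℕ) ≠ (P : ℕ) := notmem_range_of_missing f (hP ▸ Finset.mem_singleton_self P) j
  split_ifs at hchar with h1 <;> simp at hchar <;> split_ifs <;> omega

lemma card_filter_pair {α : Type*} [DecidableEq α] (P Q : α) (h : P ≠ Q)
    (pred : α → Prop) [DecidablePred pred] :
    (({P, Q} : Finset α).filter pred).card
      = (if pred P then 1 else 0) + (if pred Q then 1 else 0) := by
  rw [show ({P, Q} : Finset α) = insert P {Q} from rfl, Finset.filter_insert,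
    Finset.filter_singleton]
  split_ifs <;> simp_all

lemma card_filter_triple {α : Type*} [DecidableEq α] (P Q R : α)
    (h1 : P ≠ Q) (h2 : P ≠ R) (h3 : Q ≠ R)
    (pred : α → Prop) [DecidablePred pred] :
    (({P, Q, R} : Finset α).filter pred).card
      = (if pred P then 1 else 0) + ((if pred Q then 1 else 0) + (if pred R then 1 else 0)) := by
  rw [show ({P, Q, R} : Finset α) = insert P (insert Q {R}) from rfl, Finset.filter_insert,
    Finset.filter_insert, Finset.filter_singleton]
  split_ifs <;> simp_all

lemma closed2 {n : ℕ} (hn : 2 ≤ n) (f : Fin (n - 2) → Fin n) (hf : StrictMono f)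
    (hwin : ∃ i : ℕ, ∀ p : Fin n, p ∉ Set.range f → i ≤ (p : ℕ) ∧ (p : ℕ) < i + 3) :
    ∃ p1 p2, p1 < p2 ∧ p2 < n ∧ p2 ≤ p1 + 2 ∧
      ∀ j : Fin (n - 2), (f j : ℕ) =
        if (j : ℕ) < p1 then (j : ℕ) else if (j : ℕ) < p2 - 1 then (j : ℕ) + 1 else (j : ℕ) + 2 := by
  classical
  have hcard : (Finset.univ \ Finset.image f Finset.univ).card = 2 := by
    rw [missing_card f hf.injective]; omega
  obtain ⟨P, Q, hPQ, hS⟩ := Finset.card_eq_two.mp hcard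
  obtain ⟨i, hwin⟩ := hwin
  have hPm : P ∈ (Finset.univ \ Finset.image f Finset.univ) := by rw [hS]; simp
  have hQm : Q ∈ (Finset.univ \ Finset.image f Finset.univ) := by rw [hS]; simp
  have hPw := hwin P ((mem_missing f P).mp hPm)
  have hQw := hwin Q ((mem_missing f Q).mp hQm)
  have hPQv : (P : ℕ) ≠ (Q : ℕ) := fun hc => hPQ (Fin.ext hc)
  have key : ∀ j : Fin (n - 2), (f j : ℕ) = (j : ℕ) +
      ((if (P : ℕ) < (f j : ℕ) then 1 else 0) + (if (Q : ℕ) < (f j : ℕ) then 1 else 0)) := by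
    intro j
    have hchar := strictMono_fin_char f hf j
    rw (occs := .pos [1]) [hS] at hchar
    rw [card_filter_pair P Q hPQ] at hchar
    exact hchar
  rcases lt_or_gt_of_ne hPQv with hlt | hlt
  · refine ⟨(P : ℕ), (Q : ℕ), hlt, Q.isLt, by omega, fun j => ?_⟩
    have h1 := key j
    have h2 := notmem_range_of_missing f hPm j
    have h3 := notmem_range_of_missing f hQm j
    split_ifs at h1 ⊢ <;> omega
  · refine ⟨(Q : ℕ), (P : ℕ), hlt, P.isLt, by omega, fun j => ?_⟩
    have h1 := key j
    have h2 := notmem_range_of_missing f hPm j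
    have h3 := notmem_range_of_missing f hQm j
    split_ifs at h1 ⊢ <;> omega

lemma closed3 {n : ℕ} (hn : 3 ≤ n) (f : Fin (n - 3) → Fin n) (hf : StrictMono f)
    (hwin : ∃ i : ℕ, ∀ p : Fin n, p ∉ Set.range f → i ≤ (p : ℕ) ∧ (p : ℕ) < i + 3) :
    ∃ c, c + 3 ≤ n ∧
      ∀ j : Fin (n - 3), (f j : ℕ) = if (j : ℕ) < c then (j : ℕ) else (j : ℕ) + 3 := by
  classical
  have hcard : (Finset.univ \ Finset.image f Finset.univ).card = 3 := by
    rw [missing_card f hf.injective]; omega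
  obtain ⟨P, Q, R, h1, h2, h3, hS⟩ := Finset.card_eq_three.mp hcard
  obtain ⟨i, hwin⟩ := hwin
  have hPm : P ∈ (Finset.univ \ Finset.image f Finset.univ) := by rw [hS]; simp
  have hQm : Q ∈ (Finset.univ \ Finset.image f Finset.univ) := by rw [hS]; simp
  have hRm : R ∈ (Finset.univ \ Finset.image f Finset.univ) := by rw [hS]; simp
  have hPw := hwin P ((mem_missing f P).mp hPm)
  have hQw := hwin Q ((mem_missing f Q).mp hQm)
  have hRw := hwin R ((mem_missing f R).mp hRm)
  have h1v : (P : ℕ) ≠ (Q : ℕ) := fun hc => h1 (Fin.ext hc)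
  have h2v : (P : ℕ) ≠ (R : ℕ) := fun hc => h2 (Fin.ext hc)
  have h3v : (Q : ℕ) ≠ (R : ℕ) := fun hc => h3 (Fin.ext hc)
  have hPlt := P.isLt
  have hQlt := Q.isLt
  have hRlt := R.isLt
  refine ⟨i, by omega, fun j => ?_⟩
  have hchar := strictMono_fin_char f hf j
  rw (occs := .pos [1]) [hS] at hchar
  rw [card_filter_triple P Q R h1 h2 h3] at hchar
  have hp2 := notmem_range_of_missing f hPm j
  have hp3 := notmem_range_of_missing f hQm j
  have hp4 := notmem_range_of_missing f hRm j
  split_ifs at hchar ⊢ <;> omega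



lemma VT_del_correct {n : ℕ} (hn : 1 ≤ n) (a1 : ℕ) (x y : Fin n → Bool)
    (hx : x ∈ VT n a1) (hy : y ∈ VT n a1)
    (p q : ℕ) (hp : p < n) (hq : q < n) (hpq : p ≤ q)
    (z : Fin (n - 1) → Bool) (f g : Fin (n - 1) → Fin n)
    (hfp : ∀ j : Fin (n - 1), (f j : ℕ) = if (j : ℕ) < p then (j : ℕ) else (j : ℕ) + 1)
    (hgq : ∀ j : Fin (n - 1), (g j : ℕ) = if (j : ℕ) < q then (j : ℕ) else (j : ℕ) + 1)
    (hzx : ∀ j, z j = x (f j)) (hzy : ∀ j, z j = y (g j)) : x = y := by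
  classical
  have hrx : ∀ i, i < n - 1 → toF z i = if i < p then toF x i else toF x (i + 1) := by
    intro i hi
    rw [toF_lt z hi, hzx ⟨i, hi⟩]
    have hv := hfp ⟨i, hi⟩
    split_ifs at hv ⊢ with h1
    · rw [toF_lt x (by omega : i < n)]
      have he : f ⟨i, hi⟩ = (⟨i, by omega⟩ : Fin n) := Fin.ext (by simpa using hv)
      rw [he]
    · rw [toF_lt x (by omega : i + 1 < n)]
      have he : f ⟨i, hi⟩ = (⟨i + 1, by omega⟩ : Fin n) := Fin.ext (by simpa using hv)
      rw [he]
  have hry : ∀ i, i < n - 1 → toF z i = if i < q then toF y i else toF y (i + 1) := by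
    intro i hi
    rw [toF_lt z hi, hzy ⟨i, hi⟩]
    have hv := hgq ⟨i, hi⟩
    split_ifs at hv ⊢ with h1
    · rw [toF_lt y (by omega : i < n)]
      have he : g ⟨i, hi⟩ = (⟨i, by omega⟩ : Fin n) := Fin.ext (by simpa using hv)
      rw [he]
    · rw [toF_lt y (by omega : i + 1 < n)]
      have he : g ⟨i, hi⟩ = (⟨i + 1, by omega⟩ : Fin n) := Fin.ext (by simpa using hv)
      rw [he]
  have hkx := sum_del (toF x) (toF z) (n - 1) p (by omega) hrx
  have hky := sum_del (toF y) (toF z) (n - 1) q (by omega) hry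
  rw [show n - 1 + 1 = n from by omega] at hkx hky
  -- split Ico p (n-1) at q
  have hsplit : (∑ i ∈ Finset.Ico p (n - 1), toF z i)
      = (∑ i ∈ Finset.Ico p q, toF z i) + ∑ i ∈ Finset.Ico q (n - 1), toF z i := by
    rw [Finset.sum_Ico_consecutive _ hpq (by omega)]
  -- the main identity
  have hmodxy : (∑ i ∈ Finset.range n, (i + 1) * toF x i)
      ≡ (∑ i ∈ Finset.range n, (i + 1) * toF y i) [MOD n + 1] := by
    have hx' := hx; have hy' := hy
    unfold VT at hx' hy'
    rw [Set.mem_setOf_eq, sum_toF_weighted] at hx' hy'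
    exact hx'.trans hy'.symm
  set Sx := ∑ i ∈ Finset.range n, (i + 1) * toF x i with hSx
  set Sy := ∑ i ∈ Finset.range n, (i + 1) * toF y i with hSy
  set Sz := ∑ i ∈ Finset.range (n - 1), (i + 1) * toF z i with hSz
  set A := ∑ i ∈ Finset.Ico p q, toF z i with hA
  set B := ∑ i ∈ Finset.Ico q (n - 1), toF z i with hB
  set P := (p + 1) * toF x p with hP
  set Q := (q + 1) * toF y q with hQ
  -- Sx = Sz + (A + B) + P ; Sy = Sz + B + Q
  have hid : Sx + Q = Sy + (A + P) := by omega
  have hcong : Q ≡ A + P [MOD n + 1] := by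
    have s1 : Sy + Q ≡ Sx + Q [MOD n + 1] := Nat.ModEq.add_right _ hmodxy.symm
    have s2 : Sy + Q ≡ Sy + (A + P) [MOD n + 1] := s1.trans (by rw [hid])
    exact Nat.ModEq.add_left_cancel' _ s2
  have hxp : toF x p ≤ 1 := toF_le_one x p
  have hyq : toF y q ≤ 1 := toF_le_one y q
  have hAle : A ≤ q - p := by
    have := Finset.sum_le_card_nsmul (Finset.Ico p q) (fun i => toF z i) 1
      (fun i _ => toF_le_one z i)
    simpa [Nat.card_Ico] using this
  have heq : Q = A + P := by
    have h1 : Q < n + 1 := by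
      have : Q ≤ q + 1 := by rw [hQ]; nlinarith [hyq]
      omega
    have h2 : A + P < n + 1 := by
      have : P ≤ p + 1 := by rw [hP]; nlinarith [hxp]
      omega
    have := hcong
    unfold Nat.ModEq at this
    rw [Nat.mod_eq_of_lt h1, Nat.mod_eq_of_lt h2] at this
    exact this
  -- conclude structure
  have ht : toF x p = toF y q ∧ ∀ j, p ≤ j → j < q → toF z j = toF y q := by
    rcases Nat.le_one_iff_eq_zero_or_eq_one.mp hyq with h0 | h1
    · have hQ0 : Q = 0 := by rw [hQ, h0]; ring
      have hA0 : A = 0 := by omega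
      have hP0 : P = 0 := by omega
      have hxp0 : toF x p = 0 := by
        rcases Nat.le_one_iff_eq_zero_or_eq_one.mp hxp with h | h
        · exact h
        · rw [hP, h] at hP0; omega
      exact ⟨by rw [hxp0, h0], fun j hj1 hj2 => by
        rw [h0]
        exact sum_bits_all_zero hA0 j hj1 hj2⟩
    · have hQ1 : Q = q + 1 := by rw [hQ, h1]; ring
      have hxp1 : toF x p = 1 := by
        rcases Nat.le_one_iff_eq_zero_or_eq_one.mp hxp with h | h
        · rw [hP, h] at heq; simp at heq; omega
        · exact h
      have hP1 : P = p + 1 := by rw [hP, hxp1]; ring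
      have hA1 : A = q - p := by omega
      exact ⟨by rw [hxp1, h1], fun j hj1 hj2 => by
        rw [h1]
        exact sum_bits_all_one (fun j _ _ => toF_le_one z j) hA1 j hj1 hj2⟩
  obtain ⟨hbit, hmid⟩ := ht
  have hXY : ∀ i, i < n → toF x i = toF y i := by
    intro i hi
    rcases lt_trichotomy i p with h1 | h1 | h1
    · have e1 := hrx i (by omega)
      have e2 := hry i (by omega)
      rw [if_pos h1] at e1
      rw [if_pos (by omega)] at e2
      omega
    · subst h1
      rcases Nat.eq_or_lt_of_le hpq with h2 | h2
      · rw [hbit, h2]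
      · have e2 := hry i (by omega)
        rw [if_pos h2] at e2
        have := hmid i (le_refl i) h2
        omega
    · -- i > p
      have e1 := hrx (i - 1) (by omega)
      rw [if_neg (by omega), show i - 1 + 1 = i from by omega] at e1
      rcases lt_trichotomy i q with h2 | h2 | h2
      · have e2 := hry i (by omega)
        rw [if_pos h2] at e2
        have m1 := hmid (i - 1) (by omega) (by omega)
        have m2 := hmid i (by omega) h2
        omega
      · subst h2
        have m1 := hmid (i - 1) (by omega) (by omega)
        omega
      · have e2 := hry (i - 1) (by omega)
        rw [if_neg (by omega), show i - 1 + 1 = i from by omega] at e2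
        omega
  funext j
  have := hXY (j : ℕ) j.isLt
  rw [toF_lt x j.isLt, toF_lt y j.isLt] at this
  exact toNat_inj this


lemma L2arith0 (m i b1 b2 c1 c2 : ℕ) (hm : 4 ≤ m) (hi : i + 1 < m)
    (hb1 : b1 ≤ 1) (hb2 : b2 ≤ 1) (hc1 : c1 ≤ 1) (hc2 : c2 ≤ 1)
    (hE : b1 + b2 = c1 + c2)
    (hdvd : (2 * (m : ℤ) - 1) ∣ (((i : ℤ) + 1) * b1 + ((i : ℤ) + 2) * b2)
      - (((i : ℤ) + 1) * c1 + ((i : ℤ) + 2) * c2)) :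
    b1 = c1 ∧ b2 = c2 := by
  interval_cases b1 <;> interval_cases b2 <;> interval_cases c1 <;> interval_cases c2 <;>
    first
      | omega
      | (exfalso
         have h0 := Int.eq_zero_of_abs_lt_dvd hdvd (by rw [abs_lt]; constructor <;> push_cast <;> omega)
         push_cast at h0
         omega)

lemma L2arith (m i i' s' b1 b2 c1 c2 au av : ℕ)
    (hm : 4 ≤ m) (hi' : i' + 1 < m) (hii : i < i')
    (hb1 : b1 ≤ 1) (hb2 : b2 ≤ 1) (hc1 : c1 ≤ 1) (hc2 : c2 ≤ 1)
    (hau : au ≤ 1) (hav : av ≤ 1)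
    (hs' : s' ≤ i' - (i + 1))
    (hE : au + (c1 + c2) = av + (b1 + b2))
    (hdvd : (2 * (m : ℤ) - 1) ∣
      ((((i' : ℤ) + 1) * av + ((s' : ℤ) + av) + ((i : ℤ) + 1) * b1 + ((i : ℤ) + 2) * b2)
        - (((i : ℤ) + 1) * au + ((i' : ℤ) + 1) * c1 + ((i' : ℤ) + 2) * c2))) :
    b1 = au ∧ c1 = b2 ∧ c2 = av ∧ s' = (i' - (i + 1)) * b2 := by
  interval_cases b1 <;> interval_cases b2 <;> interval_cases au <;> interval_cases av <;>
    interval_cases c1 <;> interval_cases c2 <;>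
    first
      | omega
      | (have h0 := Int.eq_zero_of_abs_lt_dvd hdvd (by rw [abs_lt]; constructor <;> push_cast <;> omega)
         push_cast at h0
         omega)


lemma C21_d21_core {m : ℕ} (hm : 4 ≤ m) {A C : ℕ} {u v : Fin m → Bool}
    (hu : u ∈ C21 m A C) (hv : v ∈ C21 m A C)
    (i i' : ℕ) (hi : i + 1 < m) (hi' : i' + 1 < m) (hii : i ≤ i')
    (au av : ℕ) (hau : au ≤ 1) (hav : av ≤ 1)
    (Z : ℕ → ℕ)
    (hru : ∀ j, j < m - 1 → Z j = if j < i then toF u j else if j = i then au else toF u (j + 1))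
    (hrv : ∀ j, j < m - 1 → Z j = if j < i' then toF v j else if j = i' then av else toF v (j + 1)) :
    u = v := by
  classical
  -- basic bit bounds on Z
  have hZle : ∀ j, j < m - 1 → Z j ≤ 1 := by
    intro j hj
    rw [hru j hj]
    split_ifs <;> first | exact toF_le_one u _ | exact hau
  -- sum identities
  have hku := sum_d21 (toF u) Z (m - 1) i (by omega) au hru
  have hkv := sum_d21 (toF v) Z (m - 1) i' (by omega) av hrv
  have hwu := sum_d21_wt (toF u) Z (m - 1) i (by omega) au hru
  have hwv := sum_d21_wt (toF v) Z (m - 1) i' (by omega) av hrv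
  rw [show m - 1 + 1 = m from by omega] at hku hkv hwu hwv
  -- membership congruences
  obtain ⟨huw, hus⟩ := hu
  obtain ⟨hvw, hvs⟩ := hv
  rw [sum_toF] at huw hvw
  rw [sum_toF_weighted] at hus hvs
  have hWuv : (∑ j ∈ Finset.range m, toF u j) ≡ (∑ j ∈ Finset.range m, toF v j) [MOD 4] :=
    huw.trans hvw.symm
  have hSuv : (∑ j ∈ Finset.range m, (j + 1) * toF u j)
      ≡ (∑ j ∈ Finset.range m, (j + 1) * toF v j) [MOD 2 * m - 1] :=
    hus.trans hvs.symm
  -- E equation (weights mod 4)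
  have hE : au + (toF v i' + toF v (i' + 1)) = av + (toF u i + toF u (i + 1)) := by
    have hident : (∑ j ∈ Finset.range m, toF u j) + (au + (toF v i' + toF v (i' + 1)))
        = (∑ j ∈ Finset.range m, toF v j) + (av + (toF u i + toF u (i + 1))) := by
      omega
    have s4 : (∑ j ∈ Finset.range m, toF v j) + (au + (toF v i' + toF v (i' + 1)))
        ≡ (∑ j ∈ Finset.range m, toF v j) + (av + (toF u i + toF u (i + 1))) [MOD 4] := by
      calc (∑ j ∈ Finset.range m, toF v j) + (au + (toF v i' + toF v (i' + 1)))
          ≡ (∑ j ∈ Finset.range m, toF u j) + (au + (toF v i' + toF v (i' + 1))) [MOD 4] :=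
            Nat.ModEq.add_right _ hWuv.symm
        _ = (∑ j ∈ Finset.range m, toF v j) + (av + (toF u i + toF u (i + 1))) := hident
    have s3 := Nat.ModEq.add_left_cancel' _ s4
    have hle1 : au + (toF v i' + toF v (i' + 1)) < 4 := by
      have := toF_le_one v i'; have := toF_le_one v (i' + 1); omega
    have hle2 : av + (toF u i + toF u (i + 1)) < 4 := by
      have := toF_le_one u i; have := toF_le_one u (i + 1); omega
    unfold Nat.ModEq at s3
    rw [Nat.mod_eq_of_lt hle1, Nat.mod_eq_of_lt hle2] at s3
    exact s3
  -- weighted congruence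
  have hC : ((i + 1) * au + ((∑ j ∈ Finset.Ico (i' + 1) (m - 1), Z j)
        + (i' + 1) * toF v i' + (i' + 2) * toF v (i' + 1)))
      ≡ ((i' + 1) * av + ((∑ j ∈ Finset.Ico (i + 1) (m - 1), Z j)
        + (i + 1) * toF u i + (i + 2) * toF u (i + 1))) [MOD 2 * m - 1] := by
    have hident : (∑ j ∈ Finset.range m, (j + 1) * toF u j)
          + ((i + 1) * au + ((∑ j ∈ Finset.Ico (i' + 1) (m - 1), Z j)
            + (i' + 1) * toF v i' + (i' + 2) * toF v (i' + 1)))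
        = (∑ j ∈ Finset.range m, (j + 1) * toF v j)
          + ((i' + 1) * av + ((∑ j ∈ Finset.Ico (i + 1) (m - 1), Z j)
            + (i + 1) * toF u i + (i + 2) * toF u (i + 1))) := by
      omega
    have s4 : (∑ j ∈ Finset.range m, (j + 1) * toF v j)
          + ((i + 1) * au + ((∑ j ∈ Finset.Ico (i' + 1) (m - 1), Z j)
            + (i' + 1) * toF v i' + (i' + 2) * toF v (i' + 1)))
        ≡ (∑ j ∈ Finset.range m, (j + 1) * toF v j)
          + ((i' + 1) * av + ((∑ j ∈ Finset.Ico (i + 1) (m - 1), Z j)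
            + (i + 1) * toF u i + (i + 2) * toF u (i + 1))) [MOD 2 * m - 1] := by
      calc (∑ j ∈ Finset.range m, (j + 1) * toF v j)
          + ((i + 1) * au + ((∑ j ∈ Finset.Ico (i' + 1) (m - 1), Z j)
            + (i' + 1) * toF v i' + (i' + 2) * toF v (i' + 1)))
          ≡ (∑ j ∈ Finset.range m, (j + 1) * toF u j)
            + ((i + 1) * au + ((∑ j ∈ Finset.Ico (i' + 1) (m - 1), Z j)
              + (i' + 1) * toF v i' + (i' + 2) * toF v (i' + 1))) [MOD 2 * m - 1] :=
            Nat.ModEq.add_right _ hSuv.symm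
        _ = (∑ j ∈ Finset.range m, (j + 1) * toF v j)
          + ((i' + 1) * av + ((∑ j ∈ Finset.Ico (i + 1) (m - 1), Z j)
            + (i + 1) * toF u i + (i + 2) * toF u (i + 1))) := hident
    exact Nat.ModEq.add_left_cancel' _ s4
  have hmm : ((2 * m - 1 : ℕ) : ℤ) = 2 * (m : ℤ) - 1 := by omega
  have hmod := Nat.ModEq.dvd hC
  rw [hmm] at hmod
  have hUV : ∀ j, j < m → toF u j = toF v j := by
    rcases Nat.eq_or_lt_of_le hii with heq | hlt
    · -- i = i'
      subst heq
      have hZi : Z i = au := by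
        have := hru i (by omega); rw [if_neg (by omega), if_pos rfl] at this; exact this
      have hZi' : Z i = av := by
        have := hrv i (by omega); rw [if_neg (by omega), if_pos rfl] at this; exact this
      have hauav : au = av := by omega
      subst hauav
      have hdvd0 : (2 * (m : ℤ) - 1) ∣
          (((i : ℤ) + 1) * (toF u i) + ((i : ℤ) + 2) * (toF u (i + 1)))
            - (((i : ℤ) + 1) * (toF v i) + ((i : ℤ) + 2) * (toF v (i + 1))) := by
        obtain ⟨kk, hkk⟩ := hmod
        refine ⟨kk, ?_⟩
        push_cast at hkk ⊢
        linarith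
      have key0 := L2arith0 m i (toF u i) (toF u (i + 1)) (toF v i) (toF v (i + 1)) hm hi
        (toF_le_one u i) (toF_le_one u (i + 1)) (toF_le_one v i) (toF_le_one v (i + 1))
        (by omega) hdvd0
      intro j hj
      by_cases h1 : j < i
      · have e1 := hru j (by omega); rw [if_pos h1] at e1
        have e2 := hrv j (by omega); rw [if_pos h1] at e2
        omega
      · by_cases h2 : j = i
        · subst h2; exact key0.1
        · by_cases h3 : j = i + 1
          · subst h3; exact key0.2
          · have e1 := hru (j - 1) (by omega)
            rw [if_neg (by omega), if_neg (by omega), show j - 1 + 1 = j from by omega] at e1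
            have e2 := hrv (j - 1) (by omega)
            rw [if_neg (by omega), if_neg (by omega), show j - 1 + 1 = j from by omega] at e2
            omega
    · -- i < i'
      have hZi : Z i = au := by
        have := hru i (by omega); rw [if_neg (by omega), if_pos rfl] at this; exact this
      have hVi : toF v i = au := by
        have := hrv i (by omega); rw [if_pos hlt] at this; omega
      have hZi' : Z i' = av := by
        have := hrv i' (by omega); rw [if_neg (by omega), if_pos rfl] at this; exact this
      have hUi'1 : toF u (i' + 1) = av := by
        have := hru i' (by omega); rw [if_neg (by omega), if_neg (by omega)] at this; omega
      have hT : (∑ j ∈ Finset.Ico (i + 1) (m - 1), Z j)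
          = (∑ j ∈ Finset.Ico (i + 1) i', Z j) + av
            + (∑ j ∈ Finset.Ico (i' + 1) (m - 1), Z j) := by
        rw [← Finset.sum_Ico_consecutive Z (by omega : i + 1 ≤ i' + 1) (by omega : i' + 1 ≤ m - 1),
          Finset.sum_Ico_succ_top (by omega : i + 1 ≤ i'), hZi']
      have hs'le : (∑ j ∈ Finset.Ico (i + 1) i', Z j) ≤ i' - (i + 1) := by
        have := Finset.sum_le_card_nsmul (Finset.Ico (i + 1) i') Z 1
          (fun j hj => by simp at hj; exact hZle j (by omega))
        simpa [Nat.card_Ico] using this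
      have hdvd1 : (2 * (m : ℤ) - 1) ∣
          ((((i' : ℤ) + 1) * av + (((∑ j ∈ Finset.Ico (i + 1) i', Z j : ℕ) : ℤ) + av)
              + ((i : ℤ) + 1) * (toF u i) + ((i : ℤ) + 2) * (toF u (i + 1)))
            - (((i : ℤ) + 1) * au + ((i' : ℤ) + 1) * (toF v i')
              + ((i' : ℤ) + 2) * (toF v (i' + 1)))) := by
        obtain ⟨kk, hkk⟩ := hmod
        refine ⟨kk, ?_⟩
        have hTc : ((∑ j ∈ Finset.Ico (i + 1) (m - 1), Z j : ℕ) : ℤ)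
            = ((∑ j ∈ Finset.Ico (i + 1) i', Z j : ℕ) : ℤ) + (av : ℤ)
              + ((∑ j ∈ Finset.Ico (i' + 1) (m - 1), Z j : ℕ) : ℤ) := by
          exact_mod_cast congrArg Nat.cast hT
        push_cast at hkk ⊢
        linarith
      have key := L2arith m i i' (∑ j ∈ Finset.Ico (i + 1) i', Z j)
        (toF u i) (toF u (i + 1)) (toF v i') (toF v (i' + 1)) au av hm hi' hlt
        (toF_le_one u i) (toF_le_one u (i + 1)) (toF_le_one v i') (toF_le_one v (i' + 1))
        hau hav hs'le hE hdvd1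
      obtain ⟨hb1, hc1, hc2, hs'⟩ := key
      have hZt : ∀ j, i + 1 ≤ j → j < i' → Z j = toF u (i + 1) := by
        rcases Nat.le_one_iff_eq_zero_or_eq_one.mp (toF_le_one u (i + 1)) with h0 | h0
        · rw [h0] at hs' ⊢
          simp at hs'
          intro j hj1 hj2
          exact hs' j hj1 hj2
        · rw [h0] at hs' ⊢
          simp at hs'
          intro j hj1 hj2
          exact sum_bits_all_one (fun j hj1 hj2 => hZle j (by omega)) hs' j hj1 hj2
      intro j hj
      by_cases h1 : j < i
      · have e1 := hru j (by omega); rw [if_pos h1] at e1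
        have e2 := hrv j (by omega); rw [if_pos (by omega)] at e2
        omega
      · by_cases h2 : j = i
        · subst h2; omega
        · by_cases h3 : j = i + 1
          · subst h3
            by_cases h4 : i + 1 < i'
            · have e2 := hrv (i + 1) (by omega); rw [if_pos h4] at e2
              have := hZt (i + 1) (by omega) h4
              omega
            · have h5 : i + 1 = i' := by omega
              have hv1 : toF v (i + 1) = toF v i' := by rw [h5]
              omega
          · by_cases h4 : j < i'
            · have e1 := hru (j - 1) (by omega)
              rw [if_neg (by omega), if_neg (by omega), show j - 1 + 1 = j from by omega] at e1
              have e2 := hrv j (by omega); rw [if_pos h4] at e2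
              have m1 := hZt (j - 1) (by omega) (by omega)
              have m2 := hZt j (by omega) h4
              omega
            · by_cases h5 : j = i'
              · have e1 := hru (j - 1) (by omega)
                rw [if_neg (by omega), if_neg (by omega),
                  show j - 1 + 1 = j from by omega] at e1
                have m1 := hZt (j - 1) (by omega) (by omega)
                have hv1 : toF v j = toF v i' := by rw [h5]
                omega
              · by_cases h6 : j = i' + 1
                · have hu1 : toF u j = toF u (i' + 1) := by rw [h6]
                  have hv1 : toF v j = toF v (i' + 1) := by rw [h6]
                  omega
                · have e1 := hru (j - 1) (by omega)
                  rw [if_neg (by omega), if_neg (by omega),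
                    show j - 1 + 1 = j from by omega] at e1
                  have e2 := hrv (j - 1) (by omega)
                  rw [if_neg (by omega), if_neg (by omega),
                    show j - 1 + 1 = j from by omega] at e2
                  omega
  funext j
  have := hUV (j : ℕ) j.isLt
  rw [toF_lt u j.isLt, toF_lt v j.isLt] at this
  exact toNat_inj this

lemma bool_toNat_le_one (b : Bool) : b.toNat ≤ 1 := by cases b <;> simp

lemma C21_d21Ball_disj {m : ℕ} (hm : 4 ≤ m) {A C : ℕ} {u v : Fin m → Bool}
    (hu : u ∈ C21 m A C) (hv : v ∈ C21 m A C)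
    {w : Fin (m - 1) → Bool} (hwu : w ∈ d21Ball u) (hwv : w ∈ d21Ball v) : u = v := by
  obtain ⟨i, hi, a, hwa⟩ := hwu
  obtain ⟨i', hi', a', hwa'⟩ := hwv
  have hru : ∀ j, j < m - 1 → toF w j
      = if j < i then toF u j else if j = i then a.toNat else toF u (j + 1) := by
    intro j hj
    rw [toF_lt w hj, hwa ⟨j, hj⟩]
    by_cases h1 : j < i
    · rw [if_pos h1, if_pos (show ((⟨j, hj⟩ : Fin (m - 1)) : ℕ) < i from h1),
        toF_lt u (by omega : j < m)]
    · rw [if_neg h1, if_neg (show ¬((⟨j, hj⟩ : Fin (m - 1)) : ℕ) < i from h1)]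
      by_cases h2 : j = i
      · rw [if_pos h2, if_pos (show ((⟨j, hj⟩ : Fin (m - 1)) : ℕ) = i from h2)]
      · rw [if_neg h2, if_neg (show ¬((⟨j, hj⟩ : Fin (m - 1)) : ℕ) = i from h2),
          toF_lt u (by omega : j + 1 < m)]
  have hrv : ∀ j, j < m - 1 → toF w j
      = if j < i' then toF v j else if j = i' then a'.toNat else toF v (j + 1) := by
    intro j hj
    rw [toF_lt w hj, hwa' ⟨j, hj⟩]
    by_cases h1 : j < i'
    · rw [if_pos h1, if_pos (show ((⟨j, hj⟩ : Fin (m - 1)) : ℕ) < i' from h1),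
        toF_lt v (by omega : j < m)]
    · rw [if_neg h1, if_neg (show ¬((⟨j, hj⟩ : Fin (m - 1)) : ℕ) < i' from h1)]
      by_cases h2 : j = i'
      · rw [if_pos h2, if_pos (show ((⟨j, hj⟩ : Fin (m - 1)) : ℕ) = i' from h2)]
      · rw [if_neg h2, if_neg (show ¬((⟨j, hj⟩ : Fin (m - 1)) : ℕ) = i' from h2),
          toF_lt v (by omega : j + 1 < m)]
  rcases le_total i i' with h | h
  · exact C21_d21_core hm hu hv i i' hi hi' h a.toNat a'.toNat
      (bool_toNat_le_one a) (bool_toNat_le_one a') (toF w) hru hrv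
  · exact (C21_d21_core hm hv hu i' i hi' hi h a'.toNat a.toNat
      (bool_toNat_le_one a') (bool_toNat_le_one a) (toF w) hrv hru).symm


lemma row_mem_d21 {n : ℕ} (hn : 12 ≤ n) (h2 : 2 ∣ n) (x : Fin n → Bool) (z : Fin (n - 2) → Bool)
    (p1 p2 : ℕ) (h12 : p1 < p2) (h2n : p2 < n) (hwd : p2 ≤ p1 + 2)
    (f : Fin (n - 2) → Fin n)
    (hf : ∀ j : Fin (n - 2), (f j : ℕ) =
      if (j : ℕ) < p1 then (j : ℕ) else if (j : ℕ) < p2 - 1 then (j : ℕ) + 1 else (j : ℕ) + 2)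
    (hz : ∀ j, z j = x (f j)) (r : Fin 2) :
    (fun c : Fin (n / 2 - 1) => z ⟨2 * (c : ℕ) + (r : ℕ), by
        have := c.isLt; have := r.isLt; omega⟩)
      ∈ d21Ball (arrRow 2 x r) := by
  have hr2 : (r : ℕ) < 2 := r.isLt
  by_cases hcase : p2 = p1 + 1
  · -- one deletion in this row, at column (p1 - r + 1) / 2
    apply del_mem_d21 (by omega : 2 ≤ n / 2) (arrRow 2 x r) _ ((p1 - (r : ℕ) + 1) / 2)
      (by omega : (p1 - (r : ℕ) + 1) / 2 < n / 2)
    intro c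
    have hcb : (c : ℕ) < n / 2 - 1 := c.isLt
    have e := hz ⟨2 * (c : ℕ) + (r : ℕ), by omega⟩
    have hfv := hf ⟨2 * (c : ℕ) + (r : ℕ), by omega⟩
    simp only [Fin.val_mk] at hfv
    by_cases hc : (c : ℕ) < (p1 - (r : ℕ) + 1) / 2
    · rw [if_pos hc, e]
      have he : f ⟨2 * (c : ℕ) + (r : ℕ), by omega⟩
          = (⟨(c : ℕ) * 2 + (r : ℕ), by omega⟩ : Fin n) := by
        apply Fin.ext
        rw [hfv]
        simp only [Fin.val_mk]
        split_ifs <;> omega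
      rw [he]
      rfl
    · rw [if_neg hc, e]
      have he : f ⟨2 * (c : ℕ) + (r : ℕ), by omega⟩
          = (⟨((c : ℕ) + 1) * 2 + (r : ℕ), by omega⟩ : Fin n) := by
        apply Fin.ext
        rw [hfv]
        simp only [Fin.val_mk]
        split_ifs <;> omega
      rw [he]
      rfl
  · have hp2 : p2 = p1 + 2 := by omega
    by_cases hpar : (r : ℕ) = p1 % 2
    · -- this row suffers the (2,1)-burst at position p1 / 2
      have hkey : ∀ c : Fin (n / 2 - 1),
          z ⟨2 * (c : ℕ) + (r : ℕ), by have := c.isLt; omega⟩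
            = if (c : ℕ) < p1 / 2 then arrRow 2 x r ⟨(c : ℕ), by have := c.isLt; omega⟩
              else if (c : ℕ) = p1 / 2 then x ⟨p1 + 1, by omega⟩
              else arrRow 2 x r ⟨(c : ℕ) + 1, by have := c.isLt; omega⟩ := by
        intro c
        have hcb : (c : ℕ) < n / 2 - 1 := c.isLt
        have e := hz ⟨2 * (c : ℕ) + (r : ℕ), by omega⟩
        have hfv := hf ⟨2 * (c : ℕ) + (r : ℕ), by omega⟩
        simp only [Fin.val_mk] at hfv
        by_cases hc : (c : ℕ) < p1 / 2
        · rw [if_pos hc, e]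
          have he : f ⟨2 * (c : ℕ) + (r : ℕ), by omega⟩
              = (⟨(c : ℕ) * 2 + (r : ℕ), by omega⟩ : Fin n) := by
            apply Fin.ext
            rw [hfv]
            simp only [Fin.val_mk]
            split_ifs <;> omega
          rw [he]
          rfl
        · rw [if_neg hc]
          by_cases hc2 : (c : ℕ) = p1 / 2
          · rw [if_pos hc2, e]
            have he : f ⟨2 * (c : ℕ) + (r : ℕ), by omega⟩ = (⟨p1 + 1, by omega⟩ : Fin n) := by
              apply Fin.ext
              rw [hfv]
              simp only [Fin.val_mk]
              split_ifs <;> omega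
            rw [he]
          · rw [if_neg hc2, e]
            have he : f ⟨2 * (c : ℕ) + (r : ℕ), by omega⟩
                = (⟨((c : ℕ) + 1) * 2 + (r : ℕ), by omega⟩ : Fin n) := by
              apply Fin.ext
              rw [hfv]
              simp only [Fin.val_mk]
              split_ifs <;> omega
            rw [he]
            rfl
      exact ⟨p1 / 2, by omega, x ⟨p1 + 1, by omega⟩, fun c => hkey c⟩
    · -- this row suffers a single deletion
      apply del_mem_d21 (by omega : 2 ≤ n / 2) (arrRow 2 x r) _ ((p1 - (r : ℕ) + 1) / 2)
        (by omega : (p1 - (r : ℕ) + 1) / 2 < n / 2)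
      intro c
      have hcb : (c : ℕ) < n / 2 - 1 := c.isLt
      have e := hz ⟨2 * (c : ℕ) + (r : ℕ), by omega⟩
      have hfv := hf ⟨2 * (c : ℕ) + (r : ℕ), by omega⟩
      simp only [Fin.val_mk] at hfv
      by_cases hc : (c : ℕ) < (p1 - (r : ℕ) + 1) / 2
      · rw [if_pos hc, e]
        have he : f ⟨2 * (c : ℕ) + (r : ℕ), by omega⟩
            = (⟨(c : ℕ) * 2 + (r : ℕ), by omega⟩ : Fin n) := by
          apply Fin.ext
          rw [hfv]
          simp only [Fin.val_mk]
          split_ifs <;> omega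
        rw [he]
        rfl
      · rw [if_neg hc, e]
        have he : f ⟨2 * (c : ℕ) + (r : ℕ), by omega⟩
            = (⟨((c : ℕ) + 1) * 2 + (r : ℕ), by omega⟩ : Fin n) := by
          apply Fin.ext
          rw [hfv]
          simp only [Fin.val_mk]
          split_ifs <;> omega
        rw [he]
        rfl

lemma eq_of_rows {n : ℕ} (h2 : 2 ∣ n) (x y : Fin n → Bool)
    (h0 : arrRow 2 x 0 = arrRow 2 y 0) (h1 : arrRow 2 x 1 = arrRow 2 y 1) : x = y := by
  funext j
  have hj := j.isLt
  rcases Nat.mod_two_eq_zero_or_one (j : ℕ) with h | h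
  · have e := congrFun h0 ⟨(j : ℕ) / 2, by omega⟩
    simp only [arrRow] at e
    have hje : (⟨((⟨(j : ℕ) / 2, by omega⟩ : Fin (n / 2)) : ℕ) * 2 + (((0 : Fin 2)) : ℕ), by
        omega⟩ : Fin n) = j := by
      apply Fin.ext
      simp
      omega
    rw [hje] at e
    exact e
  · have e := congrFun h1 ⟨(j : ℕ) / 2, by omega⟩
    simp only [arrRow] at e
    have hje : (⟨((⟨(j : ℕ) / 2, by omega⟩ : Fin (n / 2)) : ℕ) * 2 + (((1 : Fin 2)) : ℕ), by
        omega⟩ : Fin n) = j := by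
      apply Fin.ext
      simp
      omega
    rw [hje] at e
    exact e


end helpers18

/-- the code of Construction 5 can correct a non-consecutive deletion burst
of size at most three. -/
theorem code18_corrects_nc_burst_le_three (n : ℕ) (h6 : 6 ∣ n) (hn : 4 ≤ n / 2)
    (C3 : Set (Fin n → Bool))
    (hC3 : ∀ x ∈ C3, ∀ y ∈ C3, x ≠ y → delBall 3 x ∩ delBall 3 y = ∅)
    (a1 a2 a3 c2 c3 : ℕ) (ha1 : a1 ≤ n)
    (ha2 : a2 < 2 * (n / 2) - 1) (ha3 : a3 < 2 * (n / 2) - 1)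
    (hc2 : c2 < 4) (hc3 : c3 < 4) :
    ∀ x ∈ code18 n C3 a1 a2 a3 c2 c3, ∀ y ∈ code18 n C3 a1 a2 a3 c2 c3, x ≠ y →
      ∀ a, 1 ≤ a → a ≤ 3 → ncDelBall a 3 x ∩ ncDelBall a 3 y = ∅ := by
  intro x hx y hy hxy a hA1 hA3
  obtain ⟨hxVT, hxC3, hxr0, hxr1⟩ := hx
  obtain ⟨hyVT, hyC3, hyr0, hyr1⟩ := hy
  have hn12 : 12 ≤ n := by omega
  have h2 : 2 ∣ n := by omega
  interval_cases a
  · -- a = 1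
    apply Set.eq_empty_iff_forall_notMem.mpr
    rintro z ⟨⟨f, hfm, hfz, i0, hwin0⟩, ⟨g, hgm, hgz, i1, hwin1⟩⟩
    obtain ⟨p, hp, hfc⟩ := closed1 (by omega) f hfm
    obtain ⟨q, hq, hgc⟩ := closed1 (by omega) g hgm
    rcases le_total p q with h | h
    · exact hxy (VT_del_correct (by omega) a1 x y hxVT hyVT p q hp hq h z f g hfc hgc hfz hgz)
    · exact hxy
        (VT_del_correct (by omega) a1 y x hyVT hxVT q p hq hp h z g f hgc hfc hgz hfz).symm
  · -- a = 2
    apply Set.eq_empty_iff_forall_notMem.mpr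
    rintro z ⟨⟨f, hfm, hfz, i0, hwin0⟩, ⟨g, hgm, hgz, i1, hwin1⟩⟩
    obtain ⟨p1, p2, hp12, hp2n, hpw, hfc⟩ := closed2 (by omega) f hfm ⟨i0, hwin0⟩
    obtain ⟨q1, q2, hq12, hq2n, hqw, hgc⟩ := closed2 (by omega) g hgm ⟨i1, hwin1⟩
    have hx0 := row_mem_d21 hn12 h2 x z p1 p2 hp12 hp2n hpw f hfc hfz 0
    have hy0 := row_mem_d21 hn12 h2 y z q1 q2 hq12 hq2n hqw g hgc hgz 0
    have hx1 := row_mem_d21 hn12 h2 x z p1 p2 hp12 hp2n hpw f hfc hfz 1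
    have hy1 := row_mem_d21 hn12 h2 y z q1 q2 hq12 hq2n hqw g hgc hgz 1
    have hr0 : arrRow 2 x 0 = arrRow 2 y 0 := C21_d21Ball_disj hn hxr0 hyr0 hx0 hy0
    have hr1 : arrRow 2 x 1 = arrRow 2 y 1 := C21_d21Ball_disj hn hxr1 hyr1 hx1 hy1
    exact hxy (eq_of_rows h2 x y hr0 hr1)
  · -- a = 3
    apply Set.eq_empty_iff_forall_notMem.mpr
    rintro z ⟨⟨f, hfm, hfz, i0, hwin0⟩, ⟨g, hgm, hgz, i1, hwin1⟩⟩
    obtain ⟨c, hc3, hfc⟩ := closed3 (by omega) f hfm ⟨i0, hwin0⟩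
    obtain ⟨c', hc3', hgc⟩ := closed3 (by omega) g hgm ⟨i1, hwin1⟩
    have hzx3 : z ∈ delBall 3 x := by
      refine ⟨c, by omega, fun j => ?_⟩
      rw [hfz j]
      have hjb := j.isLt
      by_cases hcj : (j : ℕ) < c
      · rw [if_pos hcj]
        have he : f j = (⟨(j : ℕ), by omega⟩ : Fin n) := by
          apply Fin.ext
          rw [hfc j]
          simp only [Fin.val_mk]
          split_ifs <;> omega
        rw [he]
      · rw [if_neg hcj]
        have he : f j = (⟨(j : ℕ) + 3, by omega⟩ : Fin n) := by
          apply Fin.ext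
          rw [hfc j]
          simp only [Fin.val_mk]
          split_ifs <;> omega
        rw [he]
    have hzy3 : z ∈ delBall 3 y := by
      refine ⟨c', by omega, fun j => ?_⟩
      rw [hgz j]
      have hjb := j.isLt
      by_cases hcj : (j : ℕ) < c'
      · rw [if_pos hcj]
        have he : g j = (⟨(j : ℕ), by omega⟩ : Fin n) := by
          apply Fin.ext
          rw [hgc j]
          simp only [Fin.val_mk]
          split_ifs <;> omega
        rw [he]
      · rw [if_neg hcj]
        have he : g j = (⟨(j : ℕ) + 3, by omega⟩ : Fin n) := by
          apply Fin.ext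
          rw [hgc j]
          simp only [Fin.val_mk]
          split_ifs <;> omega
        rw [he]
    have hemp := hC3 x hxC3 y hyC3 hxy
    have hz3 : z ∈ (∅ : Set (Fin (n - 3) → Bool)) := hemp ▸ Set.mem_inter hzx3 hzy3
    exact Set.notMem_empty z hz3
end

section
/- Let b divide n and let 1 ≤ i ≤ n − b + 1. Then the number of vectors x ∈ 𝔽₂ⁿ whose b-burst-deletion ball has size exactly i equals N(n,b,i) = 2^b · C(n−b, i−1), where C(·,·) denotes the binomial coefficient. -/
private def Dmap (b : ℕ) {n : ℕ} (x : Fin n → Bool) (i : ℕ) : Fin (n - b) → Bool :=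
  fun j => if (j : ℕ) < i
    then x ⟨(j : ℕ), by have := j.isLt; omega⟩
    else x ⟨(j : ℕ) + b, by have := j.isLt; omega⟩

private def chg (b : ℕ) {n : ℕ} (x : Fin n → Bool) : Finset (Fin (n - b)) :=
  Finset.univ.filter (fun k => x ⟨(k : ℕ), by have := k.isLt; omega⟩
      ≠ x ⟨(k : ℕ) + b, by have := k.isLt; omega⟩)

private lemma mem_chg_iff (b n : ℕ) (x : Fin n → Bool) (k : Fin (n - b)) :
    k ∈ chg b x ↔ x ⟨(k : ℕ), by have := k.isLt; omega⟩
      ≠ x ⟨(k : ℕ) + b, by have := k.isLt; omega⟩ := by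
  simp [chg]

private lemma Dmap_eq_iff (b n : ℕ) (x : Fin n → Bool) (i j : ℕ) (hij : i ≤ j) :
    Dmap b x i = Dmap b x j ↔
      ∀ k : Fin (n - b), i ≤ (k : ℕ) → (k : ℕ) < j →
        x ⟨(k : ℕ), by have := k.isLt; omega⟩ = x ⟨(k : ℕ) + b, by have := k.isLt; omega⟩ := by
  constructor
  · intro h k hk1 hk2
    have := congrFun h k
    simp only [Dmap] at this
    rw [if_neg (by omega), if_pos (by omega)] at this
    exact this.symm
  · intro h
    funext p
    simp only [Dmap]
    split_ifs with h1 h2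
    · rfl
    · omega
    · exact (h p (by omega) (by omega)).symm
    · rfl

private def Sset (b : ℕ) {n : ℕ} (x : Fin n → Bool) : Finset ℕ :=
  insert 0 ((chg b x).image (fun k : Fin (n - b) => (k : ℕ) + 1))

private lemma mem_Sset (b n : ℕ) (x : Fin n → Bool) (s : ℕ) :
    s ∈ Sset b x ↔ s = 0 ∨ ∃ k ∈ chg b x, (k : ℕ) + 1 = s := by
  simp [Sset]

private lemma cover (b n : ℕ) (x : Fin n → Bool) :
    ∀ i, i ≤ n - b → ∃ s ∈ Sset b x, Dmap b x s = Dmap b x i := by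
  intro i
  induction i with
  | zero => exact fun _ => ⟨0, by simp [Sset], rfl⟩
  | succ k ih =>
    intro hk
    by_cases hc : (⟨k, by omega⟩ : Fin (n - b)) ∈ chg b x
    · exact ⟨k + 1, (mem_Sset b n x _).2 (Or.inr ⟨⟨k, by omega⟩, hc, rfl⟩), rfl⟩
    · obtain ⟨s, hs, he⟩ := ih (by omega)
      refine ⟨s, hs, ?_⟩
      rw [he]
      rw [mem_chg_iff] at hc
      push_neg at hc
      apply (Dmap_eq_iff b n x k (k + 1) (by omega)).2
      intro p hp1 hp2
      have hpk : (p : ℕ) = k := by omega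
      simp only [hpk]
      exact hc

private lemma inj_aux (b n : ℕ) (x : Fin n → Bool) (s t : ℕ) (hs : s ∈ Sset b x)
    (ht : t ∈ Sset b x) (hst : s < t) (he : Dmap b x s = Dmap b x t) : False := by
  rw [mem_Sset] at ht
  rcases ht with rfl | ⟨k, hk, rfl⟩
  · omega
  · rw [mem_chg_iff] at hk
    exact hk ((Dmap_eq_iff b n x s ((k : ℕ) + 1) (by omega)).1 he k (by omega) (by omega))

private lemma ncard_delBall (b n : ℕ) (x : Fin n → Bool) :
    (delBall b x).ncard = 1 + (chg b x).card := by
  have hset : delBall b x = ↑((Finset.range (n - b + 1)).image (Dmap b x)) := by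
    ext y
    simp only [delBall, Set.mem_setOf_eq, Finset.coe_image, Set.mem_image, Finset.mem_coe,
      Finset.mem_range]
    constructor
    · rintro ⟨i, hi, hy⟩
      exact ⟨i, by omega, by funext j; rw [hy j]; rfl⟩
    · rintro ⟨i, hi, rfl⟩
      exact ⟨i, by omega, fun j => rfl⟩
  rw [hset, Set.ncard_coe_finset]
  have himg : (Finset.range (n - b + 1)).image (Dmap b x) = (Sset b x).image (Dmap b x) := by
    apply Finset.Subset.antisymm
    · intro y hy
      simp only [Finset.mem_image, Finset.mem_range] at hy
      obtain ⟨i, hi, rfl⟩ := hy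
      obtain ⟨s, hs, he⟩ := cover b n x i (by omega)
      exact Finset.mem_image.2 ⟨s, hs, he⟩
    · apply Finset.image_subset_image
      intro s hs
      rw [mem_Sset] at hs
      rw [Finset.mem_range]
      rcases hs with rfl | ⟨k, _, rfl⟩
      · omega
      · have := k.isLt; omega
  rw [himg, Finset.card_image_of_injOn]
  · rw [Sset, Finset.card_insert_of_notMem (by simp), Finset.card_image_of_injOn
      (fun a _ c _ h => by exact Fin.ext (by omega))]
    omega
  · intro s hs t ht he
    simp only [Finset.mem_coe] at hs ht
    rcases lt_trichotomy s t with h | h | h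
    · exact absurd (inj_aux b n x s t hs ht h he) (by simp)
    · exact h
    · exact absurd (inj_aux b n x t s ht hs h he.symm) (by simp)

private def Fmap (b n : ℕ) (hbn : b ≤ n) (x : Fin n → Bool) :
    (Fin b → Bool) × (Fin (n - b) → Bool) :=
  (fun r => x ⟨(r : ℕ), by have := r.isLt; omega⟩,
   fun k => x ⟨(k : ℕ), by have := k.isLt; omega⟩ != x ⟨(k : ℕ) + b, by have := k.isLt; omega⟩)

private lemma Fmap_injective (b n : ℕ) (hb : 0 < b) (hbn : b ≤ n) :
    Function.Injective (Fmap b n hbn) := by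
  intro x x' h
  have h1 := congrArg Prod.fst h
  have h2 := congrArg Prod.snd h
  simp only [Fmap] at h1 h2
  suffices hS : ∀ m, ∀ j : Fin n, (j : ℕ) = m → x j = x' j by
    funext j; exact hS (j : ℕ) j rfl
  intro m
  induction m using Nat.strong_induction_on with
  | _ m ih =>
    intro j hj
    by_cases hjb : (j : ℕ) < b
    · exact congrFun h1 ⟨(j : ℕ), hjb⟩
    · have hjn := j.isLt
      have hk : (j : ℕ) - b < n - b := by omega
      have hd : (x ⟨(j : ℕ) - b, by omega⟩ != x ⟨(j : ℕ) - b + b, by omega⟩)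
          = (x' ⟨(j : ℕ) - b, by omega⟩ != x' ⟨(j : ℕ) - b + b, by omega⟩) :=
        congrFun h2 ⟨(j : ℕ) - b, hk⟩
      have hih : x ⟨(j : ℕ) - b, by omega⟩ = x' ⟨(j : ℕ) - b, by omega⟩ :=
        ih ((j : ℕ) - b) (by omega) ⟨(j : ℕ) - b, by omega⟩ rfl
      have hC : x ⟨(j : ℕ) - b + b, by omega⟩ = x j :=
        congrArg x (Fin.ext (show (j : ℕ) - b + b = (j : ℕ) by omega))
      have hC' : x' ⟨(j : ℕ) - b + b, by omega⟩ = x' j :=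
        congrArg x' (Fin.ext (show (j : ℕ) - b + b = (j : ℕ) by omega))
      have key : ∀ a a' c c' : Bool, a = a' → (a != c) = (a' != c') → c = c' := by decide
      exact key _ _ _ _ hih (by rw [← hC, ← hC']; exact hd)

private lemma Fmap_bijective (b n : ℕ) (hb : 0 < b) (hbn : b ≤ n) :
    Function.Bijective (Fmap b n hbn) := by
  rw [Fintype.bijective_iff_injective_and_card]
  refine ⟨Fmap_injective b n hb hbn, ?_⟩
  simp only [Fintype.card_prod, Fintype.card_fun, Fintype.card_bool, Fintype.card_fin]
  rw [← pow_add]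
  congr 1
  omega

private def prodSub {α β : Type*} (Q : β → Prop) : {p : α × β // Q p.2} ≃ α × {d : β // Q d} where
  toFun p := (p.1.1, ⟨p.1.2, p.2⟩)
  invFun q := ⟨(q.1, q.2.1), q.2.2⟩
  left_inv p := rfl
  right_inv q := rfl

private def funSub (M m : ℕ) :
    {d : Fin M → Bool // (Finset.univ.filter (fun k => d k = true)).card = m}
      ≃ {s : Finset (Fin M) // s.card = m} where
  toFun d := ⟨Finset.univ.filter (fun k => d.1 k = true), d.2⟩
  invFun s := ⟨fun k => decide (k ∈ s.1), by simpa using s.2⟩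
  left_inv d := by
    apply Subtype.ext
    funext k
    simp
  right_inv s := by
    apply Subtype.ext
    simp


/-- for `b ∣ n` and `1 ≤ i ≤ n − b + 1`, the number of `x ∈ 𝔽₂ⁿ` with
`|D_b(x)| = i` equals `2^b · C(n−b, i−1)`. -/
theorem card_delBall_eq (n b i : ℕ) (hb : 0 < b) (hn : 0 < n) (hdvd : b ∣ n)
    (hi1 : 1 ≤ i) (hi2 : i ≤ n - b + 1) :
    Set.ncard { x : Fin n → Bool | (delBall b x).ncard = i } =
      2 ^ b * Nat.choose (n - b) (i - 1) := by
  have hbn : b ≤ n := Nat.le_of_dvd hn hdvd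
  have hset : { x : Fin n → Bool | (delBall b x).ncard = i }
      = { x : Fin n → Bool | (chg b x).card = i - 1 } := by
    ext x
    simp only [Set.mem_setOf_eq, ncard_delBall]
    omega
  rw [hset]
  have hcard : Set.ncard { x : Fin n → Bool | (chg b x).card = i - 1 }
      = Nat.card { x : Fin n → Bool // (chg b x).card = i - 1 } := rfl
  rw [hcard, Nat.card_eq_fintype_card]
  have E1 : { x : Fin n → Bool // (chg b x).card = i - 1 }
      ≃ { p : (Fin b → Bool) × (Fin (n - b) → Bool) //
          (Finset.univ.filter (fun k => p.2 k = true)).card = i - 1 } := by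
    refine (Equiv.ofBijective (Fmap b n hbn) (Fmap_bijective b n hb hbn)).subtypeEquiv ?_
    intro x
    have : chg b x = Finset.univ.filter (fun k => (Fmap b n hbn x).2 k = true) := by
      ext k
      simp [chg, Fmap, bne_iff_ne]
    rw [this]
    rfl
  rw [Fintype.card_congr (E1.trans ((prodSub _).trans (Equiv.prodCongr (Equiv.refl _) (funSub _ _))))]
  rw [Fintype.card_prod, Fintype.card_finset_len]
  simp
end
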